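/- arXiv:math/0209285 — 6 statements merged into one kernel-verified Lean document; each statement's English description precedes it below -/
import Mathlib

section
/- Let λ = (λ₁,…,λₙ) be a vector of positive integers, fix i with 1 ≤ i ≤ n, let ℓ = lcm(λ₁,…,λ̂_i,…,λₙ) (the lcm of the λ_j with j ≠ i), and let λ' = (λ₁,…,λ_{i−1},λ_i+ℓ,λ_{i+1},…,λₙ). If I(λ') is a normal ideal, then I(λ) is a normal ideal. Moreover, if λ_i ≥ ℓ and I(λ) is normal, then I(λ') is normal. -/
open Finset

/-- `x` is integral over the ideal `I`: it satisfies an equation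
`x^m + a₁ x^{m-1} + ⋯ + a_m = 0` with `a_k ∈ I^k`. -/
def IsIntegralOverIdeal {A : Type*} [CommRing A] (I : Ideal A) (x : A) : Prop :=
  ∃ m : ℕ, 0 < m ∧ ∃ a : ℕ → A,
    (∀ k ∈ Finset.Icc 1 m, a k ∈ I ^ k) ∧
    x ^ m + ∑ k ∈ Finset.Icc 1 m, a k * x ^ (m - k) = 0

/-- An ideal is integrally closed if it contains every element integral over it. -/
def IsIntegrallyClosedIdeal {A : Type*} [CommRing A] (I : Ideal A) : Prop :=
  ∀ x : A, IsIntegralOverIdeal I x → x ∈ I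

/-- An ideal is normal if all its positive powers are integrally closed. -/
def IsNormalIdeal {A : Type*} [CommRing A] (I : Ideal A) : Prop :=
  ∀ m : ℕ, 0 < m → IsIntegrallyClosedIdeal (I ^ m)

/-- The ideal `J(λ) = (x₁^{λ₁}, …, xₙ^{λₙ})` in `K[x₁,…,xₙ]`. -/
noncomputable def Jlam (K : Type*) [Field K] {n : ℕ} (lam : Fin n → ℕ) : Ideal (MvPolynomial (Fin n) K) :=
  Ideal.span (Set.range fun i => MvPolynomial.X i ^ lam i)

/-- The ideal `I(λ)`, the integral closure of `J(λ)` in `K[x₁,…,xₙ]`: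
the ideal consisting of all elements integral over `J(λ)`. -/
noncomputable def Ilam (K : Type*) [Field K] {n : ℕ} (lam : Fin n → ℕ) : Ideal (MvPolynomial (Fin n) K) :=
  Ideal.span {x | IsIntegralOverIdeal (Jlam K lam) x}


open Finset MvPolynomial Pointwise

namespace Stmt14Aux

variable {K : Type*} [Field K] {n : ℕ}

/-! ### weights -/

def wtf (w : Fin n → ℕ) (d : Fin n →₀ ℕ) : ℕ := ∑ j, d j * w j

lemma wtf_add (w : Fin n → ℕ) (a b : Fin n →₀ ℕ) : wtf w (a + b) = wtf w a + wtf w b := by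
  simp [wtf, Finsupp.add_apply, add_mul, Finset.sum_add_distrib]

lemma wtf_single (w : Fin n → ℕ) (j : Fin n) (k : ℕ) :
    wtf w (Finsupp.single j k) = k * w j := by
  rw [wtf, Finset.sum_eq_single j]
  · simp
  · intro b _ hb; simp [Finsupp.single_apply, Ne.symm hb]
  · simp

lemma wtf_smul (w : Fin n → ℕ) (k : ℕ) (a : Fin n →₀ ℕ) : wtf w (k • a) = k * wtf w a := by
  simp [wtf, Finset.mul_sum]; ring_nf

/-! ### sums of m elements of a set -/

def sumsOf (T : Set (Fin n →₀ ℕ)) : ℕ → Set (Fin n →₀ ℕ)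
  | 0 => {0}
  | m + 1 => sumsOf T m + T

lemma add_mem_sumsOf {T : Set (Fin n →₀ ℕ)} {x y : Fin n →₀ ℕ} {p q : ℕ}
    (hx : x ∈ sumsOf T p) (hy : y ∈ sumsOf T q) : x + y ∈ sumsOf T (p + q) := by
  induction q generalizing y with
  | zero => rcases hy with rfl; simpa using hx
  | succ q ih =>
    obtain ⟨y₀, hy₀, t, ht, rfl⟩ := Set.mem_add.1 hy
    have := Set.add_mem_add (ih hy₀) ht
    rw [add_assoc] at this; exact this

lemma nsmul_mem_sumsOf {T : Set (Fin n →₀ ℕ)} {x : Fin n →₀ ℕ} (hx : x ∈ T) (k : ℕ) :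
    k • x ∈ sumsOf T k := by
  induction k with
  | zero => simp [sumsOf]
  | succ k ih => rw [succ_nsmul]; exact ⟨k • x, ih, x, hx, rfl⟩

lemma sum_nsmul_mem_sumsOf {T : Set (Fin n →₀ ℕ)} {gs : Fin n → (Fin n →₀ ℕ)}
    (hgs : ∀ j, gs j ∈ T) (k : Fin n → ℕ) (s : Finset (Fin n)) :
    (∑ j ∈ s, k j • gs j) ∈ sumsOf T (∑ j ∈ s, k j) := by
  classical
  induction s using Finset.induction_on with
  | empty => simp [sumsOf]
  | insert a s hnotmem ih =>
    rw [Finset.sum_insert hnotmem, Finset.sum_insert hnotmem, add_comm (k _ • gs _),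
      add_comm (k _)]
    exact add_mem_sumsOf ih (nsmul_mem_sumsOf (hgs _) _)

lemma mem_sumsOf_iff_family {T : Set (Fin n →₀ ℕ)} {c : Fin n →₀ ℕ} {m : ℕ} :
    c ∈ sumsOf T m ↔ ∃ b : Fin m → (Fin n →₀ ℕ), (∀ t, b t ∈ T) ∧ ∑ t, b t = c := by
  induction m generalizing c with
  | zero =>
    simp only [sumsOf, Set.mem_singleton_iff]
    constructor
    · rintro rfl; exact ⟨fun t => 0, fun t => t.elim0, by simp⟩
    · rintro ⟨b, _, rfl⟩; simp
  | succ m ih =>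
    constructor
    · intro hc
      obtain ⟨c₀, hc₀, t, ht, rfl⟩ := Set.mem_add.1 hc
      obtain ⟨b, hb, rfl⟩ := ih.1 hc₀
      refine ⟨Fin.cons t b, ?_, ?_⟩
      · intro u
        refine Fin.cases ?_ ?_ u
        · simpa using ht
        · intro u'; simpa using hb u'
      · rw [Fin.sum_univ_succ]; simp [add_comm]
    · rintro ⟨b, hb, rfl⟩
      rw [Fin.sum_univ_succ, add_comm (b 0) (∑ i : Fin m, b i.succ)]
      exact Set.add_mem_add (ih.2 ⟨fun t => b t.succ, fun t => hb _, rfl⟩) (hb 0)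

/-! ### spans of monomials -/

noncomputable def spanMono (K : Type*) [Field K] {n : ℕ} (T : Set (Fin n →₀ ℕ)) :
    Ideal (MvPolynomial (Fin n) K) :=
  Ideal.span ((fun d => monomial d (1 : K)) '' T)

lemma image_mono_add (A B : Set (Fin n →₀ ℕ)) :
    (fun d => monomial d (1 : K)) '' (A + B) =
      ((fun d => monomial d (1 : K)) '' A) * ((fun d => monomial d (1 : K)) '' B) := by
  ext x
  constructor
  · rintro ⟨c, hc, rfl⟩
    obtain ⟨a, ha, b, hb, rfl⟩ := Set.mem_add.1 hc
    show monomial (a + b) (1 : K) ∈ _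
    rw [show monomial (a + b) (1 : K) = monomial a 1 * monomial b 1 from by
      rw [monomial_mul, one_mul]]
    exact Set.mul_mem_mul (Set.mem_image_of_mem _ ha) (Set.mem_image_of_mem _ hb)
  · intro hx
    obtain ⟨p, hp, q, hq, rfl⟩ := Set.mem_mul.1 hx
    obtain ⟨a, ha, rfl⟩ := hp
    obtain ⟨b, hb, rfl⟩ := hq
    show monomial a (1 : K) * monomial b 1 ∈ _
    rw [show monomial a (1 : K) * monomial b 1 = monomial (a + b) 1 from by
      rw [monomial_mul, one_mul]]
    exact Set.mem_image_of_mem _ (Set.add_mem_add ha hb)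

lemma spanMono_pow (T : Set (Fin n →₀ ℕ)) (m : ℕ) :
    (spanMono K T) ^ m = spanMono K (sumsOf T m) := by
  induction m with
  | zero =>
    rw [pow_zero, sumsOf]
    rw [spanMono, Set.image_singleton]
    rw [show monomial (0 : Fin n →₀ ℕ) (1 : K) = 1 from by simp]
    rw [Ideal.span_singleton_one, Ideal.one_eq_top]
  | succ m ih =>
    rw [pow_succ, ih]
    show _ = spanMono K (sumsOf T m + T)
    rw [spanMono, spanMono, spanMono, Ideal.span_mul_span', image_mono_add]

lemma mono_mem_spanMono {T : Set (Fin n →₀ ℕ)} {c b : Fin n →₀ ℕ} (hc : c ∈ T) (hle : c ≤ b) :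
    monomial b (1 : K) ∈ spanMono K T := by
  classical
  rw [spanMono, mem_ideal_span_monomial_image]
  intro xi hxi
  rw [support_monomial, if_neg one_ne_zero, Finset.mem_singleton] at hxi
  subst hxi
  exact ⟨c, hc, hle⟩

lemma mem_spanMono_of_support {T : Set (Fin n →₀ ℕ)} {x : MvPolynomial (Fin n) K}
    (h : ∀ d ∈ x.support, ∃ c ∈ T, c ≤ d) : x ∈ spanMono K T :=
  (mem_ideal_span_monomial_image).2 h

/-! ### the auxiliary map φ -/

noncomputable def phi (w : Fin n → ℕ) :
    MvPolynomial (Fin n) K →+* Polynomial (MvPolynomial (Fin n) K) :=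
  eval₂Hom (Polynomial.C.comp MvPolynomial.C)
    (fun j => Polynomial.C (X j) * Polynomial.X ^ w j)

lemma phi_monomial (w : Fin n → ℕ) (d : Fin n →₀ ℕ) (c : K) :
    phi w (monomial d c) = Polynomial.C (monomial d c) * Polynomial.X ^ wtf w d := by
  rw [phi, coe_eval₂Hom] at *
  rw [eval₂_monomial]
  rw [Finsupp.prod_fintype _ _ (fun j => pow_zero _)]
  rw [monomial_eq, Finsupp.prod_fintype _ _ (fun j => pow_zero _)]
  simp only [RingHom.coe_comp, Function.comp_apply, map_mul, map_prod, map_pow, mul_pow,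
    ← pow_mul]
  rw [Finset.prod_mul_distrib, Finset.prod_pow_eq_pow_sum]
  rw [show ∑ j, w j * d j = wtf w d from Finset.sum_congr rfl fun j _ => mul_comm _ _]
  ring

lemma coeff_phi (w : Fin n → ℕ) (p : MvPolynomial (Fin n) K) (d₀ : Fin n →₀ ℕ) :
    MvPolynomial.coeff d₀ ((phi w p).coeff (wtf w d₀)) = MvPolynomial.coeff d₀ p := by
  induction p using MvPolynomial.induction_on' with
  | monomial e c =>
    rw [phi_monomial]
    rw [Polynomial.coeff_C_mul, Polynomial.coeff_X_pow]
    by_cases he : e = d₀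
    · subst he; simp
    · rw [MvPolynomial.coeff_monomial, if_neg he]
      by_cases hw : wtf w d₀ = wtf w e
      · rw [if_pos hw, mul_one, MvPolynomial.coeff_monomial, if_neg he]
      · rw [if_neg hw, mul_zero, MvPolynomial.coeff_zero]
  | add p q hp hq =>
    rw [map_add, Polynomial.coeff_add, MvPolynomial.coeff_add, hp, hq, MvPolynomial.coeff_add]

lemma supp_wt_ge_of_dvd {w : Fin n → ℕ} {x : MvPolynomial (Fin n) K} {c : ℕ}
    (h : Polynomial.X ^ c ∣ phi w x) : ∀ d ∈ x.support, c ≤ wtf w d := by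
  intro d hd
  by_contra hlt
  push_neg at hlt
  have h0 : (phi w x).coeff (wtf w d) = 0 := Polynomial.X_pow_dvd_iff.1 h _ hlt
  have := coeff_phi w x d
  rw [h0, MvPolynomial.coeff_zero] at this
  exact (MvPolynomial.mem_support_iff.1 hd) this.symm

noncomputable def Dideal (w : Fin n → ℕ) (c : ℕ) : Ideal (MvPolynomial (Fin n) K) :=
  Ideal.comap (phi w) (Ideal.span {Polynomial.X ^ c})

lemma mem_Dideal {w : Fin n → ℕ} {c : ℕ} {x : MvPolynomial (Fin n) K} :
    x ∈ Dideal (K := K) w c ↔ Polynomial.X ^ c ∣ phi w x := by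
  rw [Dideal, Ideal.mem_comap, Ideal.mem_span_singleton]

lemma pow_le_Dideal {w : Fin n → ℕ} {c : ℕ} {I : Ideal (MvPolynomial (Fin n) K)}
    (h : I ≤ Dideal w c) (k : ℕ) : I ^ k ≤ Dideal w (k * c) := by
  induction k with
  | zero => intro z _; rw [mem_Dideal]; simpa using one_dvd _
  | succ k ih =>
    rw [pow_succ]
    refine Ideal.mul_le.2 fun p hp q hq => ?_
    rw [mem_Dideal, map_mul, Nat.succ_mul, pow_add]
    exact mul_dvd_mul ((mem_Dideal).1 (ih hp)) ((mem_Dideal).1 (h hq))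

/-! ### subcounts -/

lemma exists_subcounts {k : Fin n → ℕ} {N : ℕ} (h : N ≤ ∑ j, k j) :
    ∃ k' : Fin n → ℕ, (∀ j, k' j ≤ k j) ∧ ∑ j, k' j = N := by
  induction N with
  | zero => exact ⟨fun _ => 0, fun j => Nat.zero_le _, by simp⟩
  | succ N ih =>
    obtain ⟨k', hle, hsum⟩ := ih (Nat.le_of_succ_le h)
    have hex : ∃ j, k' j < k j := by
      by_contra hc
      push_neg at hc
      have h2 : ∑ j, k j ≤ ∑ j, k' j := Finset.sum_le_sum fun j _ => hc j
      omega
    obtain ⟨j, hj⟩ := hex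
    refine ⟨Function.update k' j (k' j + 1), ?_, ?_⟩
    · intro j'
      by_cases hj' : j' = j
      · subst hj'; rw [Function.update_self]; omega
      · rw [Function.update_of_ne hj']; exact hle j'
    · rw [Finset.sum_update_of_mem (mem_univ j), ← Finset.erase_eq]
      have h2 : ∑ x ∈ univ.erase j, k' x + k' j = ∑ x, k' x :=
        Finset.sum_erase_add _ _ (mem_univ j)
      omega

/-! ### integral elements and divisibility -/

lemma dvd_phi_of_integral {w : Fin n → ℕ} {I : Ideal (MvPolynomial (Fin n) K)} {c : ℕ}
    (hI : I ≤ Dideal w c) {x : MvPolynomial (Fin n) K} (hx : IsIntegralOverIdeal I x) :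
    Polynomial.X ^ c ∣ phi w x := by
  obtain ⟨r, hr, a, ha, heq⟩ := hx
  by_contra hnd
  set y := phi w x with hy
  have hy0 : y ≠ 0 := by rintro h; exact hnd (h ▸ dvd_zero _)
  set e := y.natTrailingDegree with he
  have hec : e < c := by
    by_contra hce
    push_neg at hce
    exact hnd (Polynomial.X_pow_dvd_iff.2 fun d hd =>
      Polynomial.coeff_eq_zero_of_lt_natTrailingDegree (by omega))
  have hXe : Polynomial.X ^ e ∣ y := Polynomial.X_pow_dvd_iff.2 fun d hd =>
    Polynomial.coeff_eq_zero_of_lt_natTrailingDegree hd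
  have hpow : ∀ s : ℕ, (y ^ s).natTrailingDegree = s * e := by
    intro s
    induction s with
    | zero => simp
    | succ s ih =>
      rw [pow_succ, Polynomial.natTrailingDegree_mul (pow_ne_zero _ hy0) hy0, ih]
      ring
  have hyr : y ^ r ≠ 0 := pow_ne_zero _ hy0
  have key : (y ^ r).coeff (r * e) ≠ 0 := by
    rw [← hpow r]
    exact fun h => hyr (Polynomial.trailingCoeff_eq_zero.1 h)
  have heq2 : y ^ r + ∑ k ∈ Finset.Icc 1 r, phi w (a k) * y ^ (r - k) = 0 := by
    have h0 := congrArg (phi w) heq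
    simpa [map_add, map_pow, map_sum, map_mul] using h0
  have hterm : ∀ k ∈ Finset.Icc 1 r, (phi w (a k) * y ^ (r - k)).coeff (r * e) = 0 := by
    intro k hk
    have hk' := Finset.mem_Icc.1 hk
    have h1 : Polynomial.X ^ (k * c) ∣ phi w (a k) :=
      mem_Dideal.1 (pow_le_Dideal hI k (ha k hk))
    have h2 : Polynomial.X ^ ((r - k) * e) ∣ y ^ (r - k) := by
      rw [mul_comm, pow_mul]
      exact pow_dvd_pow_of_dvd hXe _
    have h3 : Polynomial.X ^ (k * c + (r - k) * e) ∣ phi w (a k) * y ^ (r - k) := by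
      rw [pow_add]; exact mul_dvd_mul h1 h2
    refine Polynomial.X_pow_dvd_iff.1 h3 _ ?_
    have hke : k * e < k * c := mul_lt_mul_of_pos_left hec (by omega)
    have h4 : r * e = k * e + (r - k) * e := by
      rw [← add_mul, Nat.add_sub_cancel' hk'.2]
    omega
  have hco := congrArg (fun p => Polynomial.coeff p (r * e)) heq2
  simp only [Polynomial.coeff_add, Polynomial.coeff_zero] at hco
  rw [Polynomial.finset_sum_coeff, Finset.sum_eq_zero hterm, add_zero] at hco
  exact key hco

lemma isIntegral_monomial_of {I : Ideal (MvPolynomial (Fin n) K)} {a : Fin n →₀ ℕ} {N : ℕ}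
    (hN : 0 < N) (h : monomial (N • a) (1 : K) ∈ I ^ N) :
    IsIntegralOverIdeal I (monomial a (1 : K)) := by
  refine ⟨N, hN, fun k => if k = N then -(monomial (N • a) (1 : K)) else 0, ?_, ?_⟩
  · intro k hk
    by_cases hkN : k = N
    · subst hkN; simpa using neg_mem h
    · simp only [if_neg hkN]; exact zero_mem _
  · rw [Finset.sum_eq_single N]
    · simp [monomial_pow]
    · intro b _ hb; simp only [if_neg hb, zero_mul]
    · intro hN'; exact absurd (Finset.mem_Icc.2 ⟨hN, le_refl N⟩) hN'

/-! ### the data attached to `lam` -/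

section Lam

variable {lam : Fin n → ℕ}

noncomputable def LLam (lam : Fin n → ℕ) : ℕ := Finset.univ.lcm lam

noncomputable def wlam (lam : Fin n → ℕ) : Fin n → ℕ := fun j => LLam lam / lam j

def Pset (lam : Fin n → ℕ) : Set (Fin n →₀ ℕ) := {d | LLam lam ≤ wtf (wlam lam) d}

lemma LLam_pos (hpos : ∀ j, 0 < lam j) : 0 < LLam lam := by
  rw [Nat.pos_iff_ne_zero]
  intro h0
  rw [LLam, Finset.lcm_eq_zero_iff] at h0
  obtain ⟨j, _, hj⟩ := h0
  exact (hpos j).ne' hj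

lemma lam_dvd (j : Fin n) : lam j ∣ LLam lam := Finset.dvd_lcm (mem_univ j)

lemma lam_mul_wlam (j : Fin n) : lam j * wlam lam j = LLam lam :=
  Nat.mul_div_cancel' (lam_dvd j)

lemma single_mem_Pset (j : Fin n) : Finsupp.single j (lam j) ∈ Pset lam := by
  show LLam lam ≤ wtf _ _
  rw [wtf_single, lam_mul_wlam]

lemma smul_eq_sum_single (a : Fin n →₀ ℕ) :
    LLam lam • a = ∑ j, (a j * wlam lam j) • Finsupp.single j (lam j) := by
  ext j'
  rw [Finsupp.smul_apply, Finsupp.finset_sum_apply, Finset.sum_eq_single j']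
  · rw [Finsupp.smul_apply, Finsupp.single_eq_same, smul_eq_mul, smul_eq_mul, mul_assoc,
      mul_comm (wlam lam j') (lam j'), lam_mul_wlam, mul_comm]
  · intro b _ hb
    rw [Finsupp.smul_apply, Finsupp.single_apply, if_neg hb, smul_zero]
  · intro h; exact absurd (mem_univ j') h

lemma monomial_smul_mem_pow {T : Set (Fin n →₀ ℕ)}
    (hT : ∀ j, Finsupp.single j (lam j) ∈ T) {a : Fin n →₀ ℕ} {N : ℕ}
    (hN : N ≤ wtf (wlam lam) a) :
    monomial (LLam lam • a) (1 : K) ∈ (spanMono K T) ^ N := by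
  obtain ⟨k', hk'le, hk'sum⟩ := exists_subcounts (k := fun j => a j * wlam lam j) hN
  rw [spanMono_pow]
  refine mono_mem_spanMono (c := ∑ j, k' j • Finsupp.single j (lam j)) ?_ ?_
  · have h2 := sum_nsmul_mem_sumsOf (T := T) (gs := fun j => Finsupp.single j (lam j)) hT k' univ
    rwa [hk'sum] at h2
  · rw [smul_eq_sum_single]
    refine Finset.sum_le_sum fun j _ => ?_
    have h3 : k' j • Finsupp.single j (lam j) ≤
        (k' j + (a j * wlam lam j - k' j)) • Finsupp.single j (lam j) := by
      rw [add_smul]; exact le_self_add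
    rwa [Nat.add_sub_cancel' (hk'le j)] at h3

lemma spanMono_le_Dideal {w : Fin n → ℕ} {T : Set (Fin n →₀ ℕ)} {c : ℕ}
    (h : ∀ d ∈ T, c ≤ wtf w d) : spanMono K T ≤ Dideal w c := by
  rw [spanMono, Ideal.span_le]
  rintro x ⟨d, hd, rfl⟩
  rw [SetLike.mem_coe, mem_Dideal, phi_monomial]
  exact dvd_mul_of_dvd_right (pow_dvd_pow _ (h d hd)) _

lemma Jlam_eq_spanMono :
    Jlam K lam = spanMono K (Set.range fun j => Finsupp.single j (lam j)) := by
  rw [Jlam, spanMono]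
  congr 1
  ext x
  simp only [Set.mem_range, Set.mem_image]
  constructor
  · rintro ⟨j, rfl⟩
    exact ⟨Finsupp.single j (lam j), ⟨j, rfl⟩, (X_pow_eq_monomial).symm⟩
  · rintro ⟨d, ⟨j, rfl⟩, rfl⟩
    exact ⟨j, X_pow_eq_monomial⟩

lemma Ilam_eq (hpos : ∀ j, 0 < lam j) : Ilam K lam = spanMono K (Pset lam) := by
  have hJD : Jlam K lam ≤ Dideal (wlam lam) (LLam lam) := by
    rw [Jlam_eq_spanMono]
    refine spanMono_le_Dideal ?_
    rintro d ⟨j, rfl⟩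
    rw [wtf_single, lam_mul_wlam]
  apply le_antisymm
  · rw [Ilam, Ideal.span_le]
    intro x hx
    rw [SetLike.mem_coe]
    refine mem_spanMono_of_support fun d hd => ⟨d, ?_, le_refl d⟩
    exact supp_wt_ge_of_dvd (dvd_phi_of_integral hJD hx) d hd
  · rw [spanMono, Ideal.span_le, Ilam]
    rintro x ⟨d, hd, rfl⟩
    refine Ideal.subset_span ?_
    show IsIntegralOverIdeal _ _
    refine isIntegral_monomial_of (LLam_pos hpos) ?_
    rw [Jlam_eq_spanMono]
    exact monomial_smul_mem_pow (fun j => Set.mem_range_self j) hd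

def NCnat (lam : Fin n → ℕ) : Prop :=
  ∀ m, 0 < m → ∀ a : Fin n →₀ ℕ, m * LLam lam ≤ wtf (wlam lam) a →
    ∃ c ∈ sumsOf (Pset lam) m, c ≤ a

theorem normal_iff_NCnat (hpos : ∀ j, 0 < lam j) :
    IsNormalIdeal (Ilam K lam) ↔ NCnat lam := by
  classical
  rw [show Ilam K lam = spanMono K (Pset lam) from Ilam_eq hpos]
  constructor
  · intro hnorm m hm a ha
    have hx : monomial a (1 : K) ∈ spanMono K (Pset lam) ^ m := by
      apply hnorm m hm
      apply isIntegral_monomial_of (LLam_pos hpos)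
      rw [← pow_mul]
      exact monomial_smul_mem_pow single_mem_Pset ha
    rw [spanMono_pow, spanMono] at hx
    obtain ⟨c, hc, hle⟩ := mem_ideal_span_monomial_image.1 hx a (by
      rw [support_monomial, if_neg one_ne_zero]
      exact Finset.mem_singleton_self a)
    exact ⟨c, hc, hle⟩
  · intro hNC m hm x hx
    rw [spanMono_pow]
    have hMD : spanMono K (Pset lam) ≤ Dideal (wlam lam) (LLam lam) :=
      spanMono_le_Dideal fun d hd => hd
    have hdvd := dvd_phi_of_integral (pow_le_Dideal hMD m) hx
    exact mem_spanMono_of_support fun d hd => hNC m hm d (supp_wt_ge_of_dvd hdvd d hd)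

/-! ### rescaling the conditions -/

def gof (lam : Fin n → ℕ) (i : Fin n) (ℓ : ℕ) (a : Fin n →₀ ℕ) : ℕ :=
  ∑ j ∈ univ.erase i, a j * (ℓ / lam j)

def GoodP (i : Fin n) (ℓ : ℕ) (g : (Fin n →₀ ℕ) → ℕ) (μ : ℕ) (b : Fin n →₀ ℕ) : Prop :=
  ℓ * μ ≤ μ * g b + ℓ * b i

def Decomp (i : Fin n) (ℓ : ℕ) (g : (Fin n →₀ ℕ) → ℕ) (μ : ℕ) : Prop :=
  ∀ m, 0 < m → ∀ a : Fin n →₀ ℕ, m * (ℓ * μ) ≤ μ * g a + ℓ * a i →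
    ∃ b : Fin m → (Fin n →₀ ℕ), (∀ t, GoodP i ℓ g μ (b t)) ∧ ∑ t, b t ≤ a

lemma div_mul_key {d x y : ℕ} (hd : 0 < d) (hx : d ∣ x) (hy : d ∣ y) :
    x / d * y = y / d * x := by
  obtain ⟨e, rfl⟩ := hx
  obtain ⟨f, rfl⟩ := hy
  rw [Nat.mul_div_cancel_left _ hd, Nat.mul_div_cancel_left _ hd]
  ring

lemma scale_identity {i : Fin n} {ℓ : ℕ} (hpos : ∀ j, 0 < lam j)
    (hdl : ∀ j, j ≠ i → lam j ∣ ℓ) (a : Fin n →₀ ℕ) :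
    wtf (wlam lam) a * (ℓ * lam i) = (lam i * gof lam i ℓ a + ℓ * a i) * LLam lam := by
  rw [wtf, ← Finset.sum_erase_add _ _ (mem_univ i)]
  rw [add_mul, add_mul, Finset.sum_mul, gof, Finset.mul_sum, Finset.sum_mul]
  congr 1
  · refine Finset.sum_congr rfl fun j hj => ?_
    have hjne : j ≠ i := (Finset.mem_erase.1 hj).1
    have key : LLam lam / lam j * ℓ = ℓ / lam j * LLam lam :=
      div_mul_key (hpos j) (lam_dvd j) (hdl j hjne)
    calc a j * wlam lam j * (ℓ * lam i)
        = a j * lam i * (LLam lam / lam j * ℓ) := by rw [wlam]; ring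
      _ = a j * lam i * (ℓ / lam j * LLam lam) := by rw [key]
      _ = lam i * (a j * (ℓ / lam j)) * LLam lam := by ring
  · calc a i * wlam lam i * (ℓ * lam i)
        = a i * ℓ * (LLam lam / lam i * lam i) := by rw [wlam]; ring
      _ = a i * ℓ * LLam lam := by rw [Nat.div_mul_cancel (lam_dvd i)]
      _ = ℓ * a i * LLam lam := by ring

lemma heavy_iff {i : Fin n} {ℓ : ℕ} (hpos : ∀ j, 0 < lam j) (hl : 0 < ℓ)
    (hdl : ∀ j, j ≠ i → lam j ∣ ℓ) (m : ℕ) (a : Fin n →₀ ℕ) :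
    m * LLam lam ≤ wtf (wlam lam) a ↔
      m * (ℓ * lam i) ≤ lam i * gof lam i ℓ a + ℓ * a i := by
  have hL := LLam_pos hpos
  have hlm : 0 < ℓ * lam i := Nat.mul_pos hl (hpos i)
  constructor
  · intro h
    have h1 : m * LLam lam * (ℓ * lam i) ≤ wtf (wlam lam) a * (ℓ * lam i) :=
      Nat.mul_le_mul_right _ h
    rw [scale_identity hpos hdl] at h1
    have h2 : m * (ℓ * lam i) * LLam lam ≤
        (lam i * gof lam i ℓ a + ℓ * a i) * LLam lam := by
      calc m * (ℓ * lam i) * LLam lam = m * LLam lam * (ℓ * lam i) := by ring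
        _ ≤ _ := h1
    exact Nat.le_of_mul_le_mul_right h2 hL
  · intro h
    have h1 : m * (ℓ * lam i) * LLam lam ≤
        (lam i * gof lam i ℓ a + ℓ * a i) * LLam lam := Nat.mul_le_mul_right _ h
    rw [← scale_identity hpos hdl] at h1
    have h2 : m * LLam lam * (ℓ * lam i) ≤ wtf (wlam lam) a * (ℓ * lam i) := by
      calc m * LLam lam * (ℓ * lam i) = m * (ℓ * lam i) * LLam lam := by ring
        _ ≤ _ := h1
    exact Nat.le_of_mul_le_mul_right h2 hlm

lemma NCnat_iff_Decomp {i : Fin n} {ℓ : ℕ} (hpos : ∀ j, 0 < lam j) (hl : 0 < ℓ)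
    (hdl : ∀ j, j ≠ i → lam j ∣ ℓ) :
    NCnat lam ↔ Decomp i ℓ (gof lam i ℓ) (lam i) := by
  have hPG : ∀ b : Fin n →₀ ℕ, b ∈ Pset lam ↔ GoodP i ℓ (gof lam i ℓ) (lam i) b := by
    intro b
    have h := heavy_iff (i := i) (ℓ := ℓ) hpos hl hdl 1 b
    rw [one_mul, one_mul] at h
    exact h
  constructor
  · intro hNC m hm a ha
    obtain ⟨c, hc, hle⟩ := hNC m hm a ((heavy_iff hpos hl hdl m a).2 ha)
    obtain ⟨b, hb, rfl⟩ := mem_sumsOf_iff_family.1 hc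
    exact ⟨b, fun t => (hPG _).1 (hb t), hle⟩
  · intro hD m hm a ha
    obtain ⟨b, hb, hle⟩ := hD m hm a ((heavy_iff hpos hl hdl m a).1 ha)
    exact ⟨∑ t, b t, mem_sumsOf_iff_family.2 ⟨b, fun t => (hPG _).2 (hb t), rfl⟩, hle⟩

end Lam

/-! ### the combinatorial core -/

section Comb

variable {i : Fin n} {ℓ : ℕ} {g : (Fin n →₀ ℕ) → ℕ}

lemma g_sum (hg_add : ∀ a b, g (a + b) = g a + g b) {m : ℕ} (f : Fin m → (Fin n →₀ ℕ)) :
    g (∑ t, f t) = ∑ t, g (f t) := by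
  classical
  have hg0 : g 0 = 0 := by have := hg_add 0 0; simp at this; omega
  induction (univ : Finset (Fin m)) using Finset.induction_on with
  | empty => simpa using hg0
  | insert a s hnot ih => rw [Finset.sum_insert hnot, Finset.sum_insert hnot, hg_add, ih]

lemma GoodP_mono (hg_add : ∀ a b, g (a + b) = g a + g b) {μ : ℕ} {b b' : Fin n →₀ ℕ}
    (h : GoodP i ℓ g μ b) (hle : b ≤ b') : GoodP i ℓ g μ b' := by
  have h1 : g b ≤ g b' := by
    calc g b ≤ g b + g (b' - b) := le_self_add
      _ = g (b + (b' - b)) := (hg_add _ _).symm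
      _ = g b' := by rw [add_tsub_cancel_of_le hle]
  have h2 : b i ≤ b' i := Finsupp.le_def.1 hle i
  exact le_trans h (add_le_add (Nat.mul_le_mul_left _ h1) (Nat.mul_le_mul_left _ h2))

lemma exact_family (hg_add : ∀ a b, g (a + b) = g a + g b) {μ m : ℕ} {a : Fin n →₀ ℕ}
    (hm : 0 < m) {b : Fin m → Fin n →₀ ℕ}
    (hb : ∀ t, GoodP i ℓ g μ (b t)) (hle : ∑ t, b t ≤ a) :
    ∃ b' : Fin m → Fin n →₀ ℕ, (∀ t, GoodP i ℓ g μ (b' t)) ∧ ∑ t, b' t = a := by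
  classical
  refine ⟨Function.update b ⟨0, hm⟩ (b ⟨0, hm⟩ + (a - ∑ t, b t)), fun t => ?_, ?_⟩
  · by_cases ht : t = ⟨0, hm⟩
    · subst ht
      rw [Function.update_self]
      exact GoodP_mono hg_add (hb _) le_self_add
    · rw [Function.update_of_ne ht]
      exact hb t
  · rw [Finset.sum_update_of_mem (mem_univ _), ← Finset.erase_eq]
    have h2 : ∑ x ∈ univ.erase (⟨0, hm⟩ : Fin m), b x + b ⟨0, hm⟩ = ∑ x, b x :=
      Finset.sum_erase_add _ _ (mem_univ _)
    calc b ⟨0, hm⟩ + (a - ∑ t, b t) + ∑ x ∈ univ.erase (⟨0, hm⟩ : Fin m), b x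
        = (∑ x ∈ univ.erase (⟨0, hm⟩ : Fin m), b x + b ⟨0, hm⟩) + (a - ∑ t, b t) := by
          rw [add_comm (∑ x ∈ univ.erase (⟨0, hm⟩ : Fin m), b x) (b ⟨0, hm⟩)]
          exact add_right_comm _ _ _
      _ = (∑ x, b x) + (a - ∑ x, b x) := by rw [h2]
      _ = a := add_tsub_cancel_of_le hle

lemma erase_add_single_apply_self (b : Fin n →₀ ℕ) (d : ℕ) :
    (Finsupp.erase i b + Finsupp.single i d) i = d := by
  rw [Finsupp.add_apply, Finsupp.erase_apply, if_pos rfl, Finsupp.single_eq_same, zero_add]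

lemma erase_add_single_apply_ne (b : Fin n →₀ ℕ) (d : ℕ) {j : Fin n} (hj : j ≠ i) :
    (Finsupp.erase i b + Finsupp.single i d) j = b j := by
  rw [Finsupp.add_apply, Finsupp.erase_apply, if_neg hj, Finsupp.single_apply,
    if_neg (Ne.symm hj), add_zero]

lemma g_erase_add_single (hg_add : ∀ a b, g (a + b) = g a + g b)
    (hg_single : ∀ k, g (Finsupp.single i k) = 0)
    (hg_erase : ∀ a, g (Finsupp.erase i a) = g a) (b : Fin n →₀ ℕ) (d : ℕ) :
    g (Finsupp.erase i b + Finsupp.single i d) = g b := by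
  rw [hg_add, hg_single, add_zero, hg_erase]

lemma erase_le (a : Fin n →₀ ℕ) : Finsupp.erase i a ≤ a := by
  rw [Finsupp.le_def]
  intro j
  rw [Finsupp.erase_apply]
  split_ifs <;> omega

/-- Direction 1: normality descends from `λ'` to `λ`. -/
lemma dir1 (hg_add : ∀ a b, g (a + b) = g a + g b)
    (hg_single : ∀ k, g (Finsupp.single i k) = 0)
    (hg_erase : ∀ a, g (Finsupp.erase i a) = g a)
    (hl : 0 < ℓ) {μ : ℕ} (hμ : 0 < μ)
    (H : Decomp i ℓ g (μ + ℓ)) : Decomp i ℓ g μ := by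
  classical
  intro m hm a ha
  rcases le_or_gt (m * ℓ) (g a) with hσ | hσ
  · -- the non-i part is already heavy enough
    obtain ⟨b, hb, hble⟩ := H m hm (Finsupp.erase i a) (by
      rw [hg_erase, Finsupp.erase_apply, if_pos rfl, mul_zero, add_zero]
      calc m * (ℓ * (μ + ℓ)) = (m * ℓ) * (μ + ℓ) := by ring
        _ ≤ g a * (μ + ℓ) := Nat.mul_le_mul_right _ hσ
        _ = (μ + ℓ) * g a := by ring)
    refine ⟨b, fun t => ?_, le_trans hble (erase_le a)⟩
    have hbti : b t i = 0 := by
      have h1 : b t ≤ ∑ u, b u :=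
        Finset.single_le_sum (fun u _ => zero_le) (mem_univ t)
      have h2 := (Finsupp.le_def.1 (le_trans h1 hble)) i
      rw [Finsupp.erase_apply, if_pos rfl] at h2
      omega
    have hgd := hb t
    rw [GoodP, hbti, mul_zero, add_zero] at hgd
    have hge : ℓ ≤ g (b t) := by
      have h3 : (μ + ℓ) * ℓ ≤ (μ + ℓ) * g (b t) := by
        calc (μ + ℓ) * ℓ = ℓ * (μ + ℓ) := by ring
          _ ≤ (μ + ℓ) * g (b t) := hgd
      exact Nat.le_of_mul_le_mul_left h3 (by omega)
    show ℓ * μ ≤ μ * g (b t) + ℓ * b t i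
    calc ℓ * μ = μ * ℓ := by ring
      _ ≤ μ * g (b t) := Nat.mul_le_mul_left _ hge
      _ ≤ μ * g (b t) + ℓ * b t i := le_self_add
  · -- shift the i-th coordinate up
    set S := m * ℓ - g a with hS
    have hSg : S + g a = m * ℓ := Nat.sub_add_cancel hσ.le
    set A := a + Finsupp.single i S with hA
    have hAi : A i = a i + S := by
      rw [hA, Finsupp.add_apply, Finsupp.single_eq_same]
    have hgA : g A = g a := by rw [hA, hg_add, hg_single, add_zero]
    obtain ⟨b0, hb0, hble⟩ := H m hm A (by
      rw [hgA, hAi]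
      have expand : (μ + ℓ) * g a + ℓ * (a i + S) =
          μ * g a + ℓ * g a + ℓ * a i + ℓ * S := by ring
      rw [expand]
      have h4 : ℓ * g a + ℓ * S = ℓ * (m * ℓ) := by
        rw [← Nat.mul_add, Nat.add_comm (g a) S, hSg]
      have h5 : m * (ℓ * (μ + ℓ)) = m * (ℓ * μ) + ℓ * (m * ℓ) := by ring
      have h6 : m * (ℓ * μ) ≤ μ * g a + ℓ * a i := ha
      linarith)
    obtain ⟨b, hb, hbsum⟩ := exact_family hg_add hm hb0 hble
    have hclaim1 : ∀ t, ℓ ≤ b t i + g (b t) := by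
      intro t
      have hgd := hb t
      have h1 : (μ + ℓ) * ℓ ≤ (μ + ℓ) * (g (b t) + b t i) := by
        have e1 : (μ + ℓ) * (g (b t) + b t i) =
            ((μ + ℓ) * g (b t) + ℓ * b t i) + μ * b t i := by ring
        have e2 : (μ + ℓ) * ℓ = ℓ * (μ + ℓ) := by ring
        rw [e1, e2]
        exact le_trans hgd le_self_add
      have := Nat.le_of_mul_le_mul_left h1 (by omega)
      omega
    refine ⟨fun t => Finsupp.erase i (b t) + Finsupp.single i (b t i + g (b t) - ℓ),
      fun t => ?_, ?_⟩
    · show ℓ * μ ≤ μ * g _ + ℓ * _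
      rw [g_erase_add_single hg_add hg_single hg_erase, erase_add_single_apply_self]
      rcases le_or_gt ℓ (g (b t)) with hc | hc
      · calc ℓ * μ = μ * ℓ := by ring
          _ ≤ μ * g (b t) := Nat.mul_le_mul_left _ hc
          _ ≤ _ := le_self_add
      · have hgd := hb t
        have h1 := hclaim1 t
        have hgd' : (ℓ : ℤ) * (μ + ℓ) ≤ (μ + ℓ) * g (b t) + ℓ * b t i := by
          exact_mod_cast hgd
        zify [h1]
        linarith
    · rw [Finsupp.le_def]
      intro j
      rw [Finsupp.finset_sum_apply]
      rcases eq_or_ne i j with rfl | hj0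
      ·
        have e1 : ∀ t : Fin m, (Finsupp.erase i (b t) + Finsupp.single i
            (b t i + g (b t) - ℓ)) i = b t i + g (b t) - ℓ := fun t =>
          erase_add_single_apply_self _ _
        rw [Finset.sum_congr rfl fun t _ => e1 t]
        have e2 : ∑ t, (b t i + g (b t) - ℓ) + m * ℓ = ∑ t, (b t i + g (b t)) := by
          have e2a : ∑ t : Fin m, ((b t i + g (b t) - ℓ) + ℓ) = ∑ t, (b t i + g (b t)) :=
            Finset.sum_congr rfl fun t _ => Nat.sub_add_cancel (hclaim1 t)
          rw [← e2a, Finset.sum_add_distrib, Finset.sum_const, Finset.card_univ,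
            Fintype.card_fin, smul_eq_mul]
        have e3 : ∑ t, (b t i + g (b t)) = A i + g A := by
          rw [Finset.sum_add_distrib]
          congr 1
          · rw [← Finsupp.finset_sum_apply, hbsum]
          · rw [← g_sum hg_add, hbsum]
        rw [hAi, hgA] at e3
        linarith
      · have hj : j ≠ i := Ne.symm hj0
        have e1 : ∀ t : Fin m, (Finsupp.erase i (b t) + Finsupp.single i
            (b t i + g (b t) - ℓ)) j = b t j := fun t =>
          erase_add_single_apply_ne _ _ hj
        rw [Finset.sum_congr rfl fun t _ => e1 t]
        have e2 : ∑ t, b t j = A j := by rw [← Finsupp.finset_sum_apply, hbsum]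
        rw [e2, hA, Finsupp.add_apply, Finsupp.single_apply, if_neg fun h => hj h.symm,
          add_zero]

/-- Direction 2: normality ascends from `λ` to `λ'` when `ℓ ≤ λᵢ`. -/
lemma dir2 (hg_add : ∀ a b, g (a + b) = g a + g b)
    (hg_single : ∀ k, g (Finsupp.single i k) = 0)
    (hg_erase : ∀ a, g (Finsupp.erase i a) = g a)
    (hl : 0 < ℓ) {μ : ℕ} (hμ : 0 < μ) (hge : ℓ ≤ μ)
    (H : Decomp i ℓ g μ) : Decomp i ℓ g (μ + ℓ) := by
  classical
  intro m hm a ha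
  rcases le_or_gt (m * ℓ) (g a) with hσ | hσ
  · obtain ⟨b0, hb0, hble⟩ := H m hm (Finsupp.erase i a) (by
      rw [hg_erase, Finsupp.erase_apply, if_pos rfl, mul_zero, add_zero]
      calc m * (ℓ * μ) = (m * ℓ) * μ := by ring
        _ ≤ g a * μ := Nat.mul_le_mul_right _ hσ
        _ = μ * g a := by ring)
    refine ⟨b0, fun t => ?_, le_trans hble (erase_le a)⟩
    have hbti : b0 t i = 0 := by
      have h1 : b0 t ≤ ∑ u, b0 u :=
        Finset.single_le_sum (fun u _ => zero_le) (mem_univ t)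
      have h2 := (Finsupp.le_def.1 (le_trans h1 hble)) i
      rw [Finsupp.erase_apply, if_pos rfl] at h2
      omega
    have hgd := hb0 t
    rw [GoodP, hbti, mul_zero, add_zero] at hgd
    have hgel : ℓ ≤ g (b0 t) := by
      have h3 : μ * ℓ ≤ μ * g (b0 t) := by
        calc μ * ℓ = ℓ * μ := by ring
          _ ≤ μ * g (b0 t) := hgd
      exact Nat.le_of_mul_le_mul_left h3 hμ
    show ℓ * (μ + ℓ) ≤ (μ + ℓ) * g (b0 t) + ℓ * b0 t i
    calc ℓ * (μ + ℓ) = (μ + ℓ) * ℓ := by ring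
      _ ≤ (μ + ℓ) * g (b0 t) := Nat.mul_le_mul_left _ hgel
      _ ≤ _ := le_self_add
  · set S := m * ℓ - g a with hS
    have hSg : S + g a = m * ℓ := Nat.sub_add_cancel hσ.le
    set Ai := (S * μ + ℓ - 1) / ℓ with hAiDef
    have hdm := Nat.div_add_mod (S * μ + ℓ - 1) ℓ
    have hmod := Nat.mod_lt (S * μ + ℓ - 1) hl
    rw [← hAiDef] at hdm
    obtain ⟨R, hR⟩ : ∃ R, (S * μ + ℓ - 1) % ℓ = R := ⟨_, rfl⟩
    obtain ⟨X, hX⟩ : ∃ X, S * μ = X := ⟨_, rfl⟩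
    obtain ⟨Y, hY⟩ : ∃ Y, ℓ * Ai = Y := ⟨_, rfl⟩
    rw [hR, hX, hY] at hdm
    rw [hR] at hmod
    have hF1 : S * μ ≤ ℓ * Ai := by rw [hX, hY]; omega
    have hF2 : ℓ * Ai < S * μ + ℓ := by rw [hX, hY]; omega
    set A := Finsupp.erase i a + Finsupp.single i Ai with hA
    have hAi : A i = Ai := erase_add_single_apply_self a Ai
    have hgA : g A = g a := g_erase_add_single hg_add hg_single hg_erase a Ai
    obtain ⟨b0, hb0, hble⟩ := H m hm A (by
      rw [hgA, hAi]
      have h4 : (S + g a) * μ = (m * ℓ) * μ := by rw [hSg]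
      have h5 : m * (ℓ * μ) = m * ℓ * μ := by ring
      have h6 : (S + g a) * μ = S * μ + μ * g a := by ring
      linarith)
    obtain ⟨b, hb, hbsum⟩ := exact_family hg_add hm hb0 hble
    have hsumg : ∑ t, g (b t) = g a := by rw [← g_sum hg_add, hbsum, hgA]
    have hsumc : ∑ t, b t i = Ai := by rw [← Finsupp.finset_sum_apply, hbsum, hAi]
    -- no piece has surplus weight off the i-th coordinate
    have hnb : ∀ t, g (b t) ≤ ℓ := by
      intro τ
      by_contra hτ
      push_neg at hτ
      have hsplit : ∑ t, (μ * g (b t) + ℓ * b t i) = μ * g a + ℓ * Ai := by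
        rw [Finset.sum_add_distrib, ← Finset.mul_sum, ← Finset.mul_sum, hsumg, hsumc]
      set F : Fin m → ℕ := fun t => μ * g (b t) + ℓ * b t i with hFdef
      have hFlow : ∀ t, ℓ * μ ≤ F t := fun t => hb t
      have hτlow : ℓ * μ + μ ≤ F τ := by
        have h7 : ℓ + 1 ≤ g (b τ) := hτ
        have h8 : μ * (ℓ + 1) ≤ μ * g (b τ) := Nat.mul_le_mul_left _ h7
        have h9 : μ * (ℓ + 1) = ℓ * μ + μ := by ring
        have h9b : μ * g (b τ) ≤ F τ := by
          rw [hFdef]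
          exact le_self_add
        linarith
      have hcard : (univ.erase τ).card = m - 1 := by
        rw [Finset.card_erase_of_mem (mem_univ τ), Finset.card_univ, Fintype.card_fin]
      have h6 := Finset.card_nsmul_le_sum (univ.erase τ) F (ℓ * μ) (fun x _ => hFlow x)
      rw [hcard, smul_eq_mul] at h6
      have h6' : (m - 1) * (ℓ * μ) ≤ ∑ t ∈ univ.erase τ, F t := h6
      have hsplit2 : F τ + ∑ t ∈ univ.erase τ, F t = ∑ t, F t :=
        Finset.add_sum_erase _ _ (mem_univ τ)
      have hsplit' : ∑ t : Fin m, F t = μ * g a + ℓ * Ai := hsplit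
      have hm1 : (m - 1) * (ℓ * μ) + (ℓ * μ) = m * (ℓ * μ) := by
        have hmm : m - 1 + 1 = m := by omega
        calc (m - 1) * (ℓ * μ) + ℓ * μ = (m - 1 + 1) * (ℓ * μ) := by ring
          _ = m * (ℓ * μ) := by rw [hmm]
      -- total lower bound
      have htot : m * (ℓ * μ) + μ ≤ μ * g a + ℓ * Ai := by
        rw [← hsplit', ← hsplit2]
        linarith
      -- contradiction with minimality of Ai
      have h10 : (S + g a) * μ = S * μ + g a * μ := by ring
      have h11 : (S + g a) * μ = m * ℓ * μ := by rw [hSg]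
      have h12 : m * (ℓ * μ) = m * ℓ * μ := by ring
      have h13 : μ * g a = g a * μ := by ring
      linarith
    refine ⟨fun t => Finsupp.erase i (b t) + Finsupp.single i (b t i + (ℓ - g (b t))),
      fun t => ?_, ?_⟩
    · show ℓ * (μ + ℓ) ≤ (μ + ℓ) * g _ + ℓ * _
      rw [g_erase_add_single hg_add hg_single hg_erase, erase_add_single_apply_self]
      have hgd := hb t
      have h1 := hnb t
      have hgd' : (ℓ : ℤ) * μ ≤ μ * g (b t) + ℓ * b t i := by exact_mod_cast hgd
      zify [h1]
      linarith
    · rw [Finsupp.le_def]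
      intro j
      rw [Finsupp.finset_sum_apply]
      rcases eq_or_ne i j with rfl | hj0
      ·
        have e1 : ∀ t : Fin m, (Finsupp.erase i (b t) + Finsupp.single i
            (b t i + (ℓ - g (b t)))) i = b t i + (ℓ - g (b t)) := fun t =>
          erase_add_single_apply_self _ _
        rw [Finset.sum_congr rfl fun t _ => e1 t, Finset.sum_add_distrib, hsumc]
        have e2 : ∑ t, (ℓ - g (b t)) + ∑ t, g (b t) = m * ℓ := by
          rw [← Finset.sum_add_distrib]
          rw [Finset.sum_congr rfl fun t _ => Nat.sub_add_cancel (hnb t)]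
          rw [Finset.sum_const, Finset.card_univ, Fintype.card_fin, smul_eq_mul, mul_comm]
        have e3 : ∑ t, (ℓ - g (b t)) = S := by linarith
        rw [e3]
        -- ℓ * (Ai + S) < ℓ * (a i + 1)
        have h7 := ha
        have h8 : (S + g a) * (μ + ℓ) = m * ℓ * (μ + ℓ) := by rw [hSg]
        have h9 : (S + g a) * (μ + ℓ) = S * μ + S * ℓ + (μ + ℓ) * g a := by ring
        have h10 : m * (ℓ * (μ + ℓ)) = m * ℓ * (μ + ℓ) := by ring
        -- so ℓ * a i ≥ S * μ + S * ℓ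
        have h11 : ℓ * (Ai + S) < ℓ * (a i + 1) := by
          have e4 : ℓ * (Ai + S) = ℓ * Ai + ℓ * S := by ring
          have e5 : ℓ * (a i + 1) = ℓ * a i + ℓ := by ring
          have e6 : S * ℓ = ℓ * S := by ring
          linarith
        have h12 := Nat.lt_of_mul_lt_mul_left h11
        omega
      · have hj : j ≠ i := Ne.symm hj0
        have e1 : ∀ t : Fin m, (Finsupp.erase i (b t) + Finsupp.single i
            (b t i + (ℓ - g (b t)))) j = b t j := fun t =>
          erase_add_single_apply_ne _ _ hj
        rw [Finset.sum_congr rfl fun t _ => e1 t]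
        have e2 : ∑ t, b t j = A j := by rw [← Finsupp.finset_sum_apply, hbsum]
        rw [e2, hA, Finsupp.add_apply, Finsupp.single_apply, if_neg fun h => hj h.symm,
          add_zero, Finsupp.erase_apply, if_neg hj]

end Comb

section Gof

lemma gof_add (lam : Fin n → ℕ) (i : Fin n) (ℓ : ℕ) (a b : Fin n →₀ ℕ) :
    gof lam i ℓ (a + b) = gof lam i ℓ a + gof lam i ℓ b := by
  rw [gof, gof, gof, ← Finset.sum_add_distrib]
  exact Finset.sum_congr rfl fun j _ => by rw [Finsupp.add_apply, add_mul]

lemma gof_single_i (lam : Fin n → ℕ) (i : Fin n) (ℓ : ℕ) (k : ℕ) :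
    gof lam i ℓ (Finsupp.single i k) = 0 :=
  Finset.sum_eq_zero fun j hj => by
    rw [Finsupp.single_apply, if_neg fun h => (Finset.mem_erase.1 hj).1 h.symm, zero_mul]

lemma gof_erase (lam : Fin n → ℕ) (i : Fin n) (ℓ : ℕ) (a : Fin n →₀ ℕ) :
    gof lam i ℓ (Finsupp.erase i a) = gof lam i ℓ a :=
  Finset.sum_congr rfl fun j hj => by
    rw [Finsupp.erase_apply, if_neg (Finset.mem_erase.1 hj).1]

end Gof

end Stmt14Aux

open Stmt14Aux in
theorem stmt14 {K : Type*} [Field K] {n : ℕ} (lam : Fin n → ℕ) (hlam : ∀ i, 0 < lam i)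
    (i : Fin n) (ℓ : ℕ) (hℓ : ℓ = (Finset.univ.erase i).lcm lam)
    (lam' : Fin n → ℕ) (hlam' : lam' = Function.update lam i (lam i + ℓ)) :
    (IsNormalIdeal (Ilam K lam') → IsNormalIdeal (Ilam K lam)) ∧
    (ℓ ≤ lam i → IsNormalIdeal (Ilam K lam) → IsNormalIdeal (Ilam K lam')) := by
  classical
  have hipos : 0 < lam i := hlam i
  have hl : 0 < ℓ := by
    rw [hℓ, Nat.pos_iff_ne_zero]
    intro h0
    rw [Finset.lcm_eq_zero_iff] at h0
    obtain ⟨j, _, hj0⟩ := h0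
    exact (hlam j).ne' hj0
  have hdl : ∀ j, j ≠ i → lam j ∣ ℓ := fun j hj =>
    hℓ ▸ Finset.dvd_lcm (Finset.mem_erase.2 ⟨hj, Finset.mem_univ j⟩)
  have hlam'_ne : ∀ j, j ≠ i → lam' j = lam j := fun j hj => by
    rw [hlam', Function.update_of_ne hj]
  have hlam'_i : lam' i = lam i + ℓ := by rw [hlam', Function.update_self]
  have hpos' : ∀ j, 0 < lam' j := fun j => by
    by_cases hj : j = i
    · subst hj; rw [hlam'_i]; omega
    · rw [hlam'_ne j hj]; exact hlam j
  have hdl' : ∀ j, j ≠ i → lam' j ∣ ℓ := fun j hj => by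
    rw [hlam'_ne j hj]; exact hdl j hj
  have hgeq : gof lam' i ℓ = gof lam i ℓ := by
    funext a
    exact Finset.sum_congr rfl fun j hj => by
      rw [hlam'_ne j (Finset.mem_erase.1 hj).1]
  have hga := gof_add lam i ℓ
  have hgs := gof_single_i lam i ℓ
  have hge := gof_erase lam i ℓ
  have E1 : IsNormalIdeal (Ilam K lam) ↔ Decomp i ℓ (gof lam i ℓ) (lam i) :=
    (normal_iff_NCnat hlam).trans (NCnat_iff_Decomp hlam hl hdl)
  have E2 : IsNormalIdeal (Ilam K lam') ↔ Decomp i ℓ (gof lam i ℓ) (lam i + ℓ) := by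
    refine (normal_iff_NCnat hpos').trans ?_
    have h := NCnat_iff_Decomp (lam := lam') (i := i) (ℓ := ℓ) hpos' hl hdl'
    rwa [hgeq, hlam'_i] at h
  constructor
  · intro h
    exact E1.2 (dir1 hga hgs hge hl hipos (E2.1 h))
  · intro hli h
    exact E2.2 (dir2 hga hgs hge hl hipos hli (E1.1 h))
end

section
/- I(λ) is a normal ideal if and only if every minimal generator (a₁,…,aₙ,d) of the monoid M(λ) has d ≤ 1. -/
open Finset

/-- The monoid `M(λ) = {(a₁,…,aₙ,d) ∈ ℕ^{n+1} | a₁/λ₁ + ⋯ + aₙ/λₙ ≥ d}`,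
the exponent monoid of the integral closure of the Rees algebra `R[I(λ)t]`. -/
def Mlam {n : ℕ} (lam : Fin n → ℕ) : Set ((Fin n → ℕ) × ℕ) :=
  {v | (v.2 : ℚ) ≤ ∑ i, (v.1 i : ℚ) / (lam i : ℚ)}

/-- A minimal generator of `M(λ)`: a nonzero element of `M(λ)` that cannot be
written as the sum of two nonzero elements of `M(λ)`. -/
def IsMinimalGenerator {n : ℕ} (lam : Fin n → ℕ) (v : (Fin n → ℕ) × ℕ) : Prop :=
  v ∈ Mlam lam ∧ v ≠ 0 ∧
    ¬∃ u w : (Fin n → ℕ) × ℕ, u ∈ Mlam lam ∧ w ∈ Mlam lam ∧ u ≠ 0 ∧ w ≠ 0 ∧ v = u + w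

namespace Stmt15Aux

open MvPolynomial

variable {K : Type*} [Field K] {n : ℕ}

def NN (lam : Fin n → ℕ) : ℕ := ∏ i, lam i
def ww (lam : Fin n → ℕ) (i : Fin n) : ℕ := NN lam / lam i
def wdeg (lam : Fin n → ℕ) (a : Fin n →₀ ℕ) : ℕ := ∑ i, ww lam i * a i
def wdeg' (lam : Fin n → ℕ) (b : Fin n → ℕ) : ℕ := ∑ i, ww lam i * b i

variable (lam : Fin n → ℕ)

lemma NN_pos (hlam : ∀ i, 0 < lam i) : 0 < NN lam :=
  Finset.prod_pos fun i _ => hlam i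

lemma lam_dvd (i : Fin n) : lam i ∣ NN lam :=
  Finset.dvd_prod_of_mem _ (Finset.mem_univ i)

lemma lam_mul_ww (i : Fin n) : lam i * ww lam i = NN lam :=
  Nat.mul_div_cancel' (lam_dvd lam i)

lemma ww_cast (hlam : ∀ i, 0 < lam i) (i : Fin n) :
    ((ww lam i : ℚ)) = (NN lam : ℚ) / (lam i : ℚ) := by
  rw [ww, Nat.cast_div (lam_dvd lam i)]
  exact_mod_cast (hlam i).ne'

lemma wdeg_coe (a : Fin n →₀ ℕ) : wdeg lam a = wdeg' lam ⇑a := rfl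

lemma mem_Mlam_iff (hlam : ∀ i, 0 < lam i) (b : Fin n → ℕ) (d : ℕ) :
    (b, d) ∈ Mlam lam ↔ NN lam * d ≤ wdeg' lam b := by
  have hN : (0:ℚ) < (NN lam : ℚ) := by exact_mod_cast NN_pos lam hlam
  have key : ((wdeg' lam b : ℚ)) = (NN lam : ℚ) * ∑ i, (b i : ℚ) / (lam i : ℚ) := by
    rw [wdeg', Nat.cast_sum, Finset.mul_sum]
    refine Finset.sum_congr rfl fun i _ => ?_
    rw [Nat.cast_mul, ww_cast lam hlam i]
    ring
  constructor
  · intro h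
    have : (NN lam * d : ℚ) ≤ (wdeg' lam b : ℚ) := by
      rw [key]
      exact mul_le_mul_of_nonneg_left h hN.le
    exact_mod_cast this
  · intro h
    have h' : ((NN lam : ℚ)) * d ≤ (NN lam : ℚ) * ∑ i, (b i : ℚ) / (lam i : ℚ) := by
      rw [← key]; exact_mod_cast h
    exact le_of_mul_le_mul_left h' hN

end Stmt15Aux

namespace Stmt15Aux

variable {K : Type*} [Field K] {n : ℕ} (lam : Fin n → ℕ)

open MvPolynomial in
def Tq (K : Type*) [Field K] {n : ℕ} (lam : Fin n → ℕ) (c : ℕ) :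
    Ideal (MvPolynomial (Fin n) K) where
  carrier := {f | ∀ a ∈ f.support, c ≤ wdeg lam a}
  add_mem' := by
    classical
    intro f g hf hg a ha
    rcases Finset.mem_union.mp (MvPolynomial.support_add ha) with h | h
    · exact hf a h
    · exact hg a h
  zero_mem' := by simp
  smul_mem' := by
    classical
    intro r f hf a ha
    rw [smul_eq_mul] at ha
    obtain ⟨b, _, b', hb', rfl⟩ :=
      Finset.mem_add.mp (MvPolynomial.support_mul r f ha)
    calc c ≤ wdeg lam b' := hf b' hb'
    _ ≤ wdeg lam (b + b') := by
        unfold wdeg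
        refine Finset.sum_le_sum fun i _ => ?_
        simp [Finsupp.add_apply, Nat.mul_le_mul_left, mul_add]

lemma mem_Tq_iff {c : ℕ} {f : MvPolynomial (Fin n) K} :
    f ∈ Tq K lam c ↔ ∀ a ∈ f.support, c ≤ wdeg lam a := Iff.rfl

lemma wdeg_add (a b : Fin n →₀ ℕ) :
    wdeg lam (a + b) = wdeg lam a + wdeg lam b := by
  unfold wdeg
  rw [← Finset.sum_add_distrib]
  exact Finset.sum_congr rfl fun i _ => by simp [Finsupp.add_apply, mul_add]

lemma Tq_mul_le (c d : ℕ) : Tq K lam c * Tq K lam d ≤ Tq K lam (c + d) := by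
  classical
  refine Ideal.mul_le.mpr fun f hf g hg => ?_
  intro a ha
  obtain ⟨b, hb, b', hb', rfl⟩ := Finset.mem_add.mp (MvPolynomial.support_mul f g ha)
  rw [wdeg_add]
  exact Nat.add_le_add (hf b hb) (hg b' hb')

lemma Tq_pow_le (c k : ℕ) : (Tq K lam c) ^ k ≤ Tq K lam (k * c) := by
  induction k with
  | zero => intro f _; intro a _; simp
  | succ k ih =>
      rw [pow_succ]
      calc (Tq K lam c) ^ k * Tq K lam c ≤ Tq K lam (k * c) * Tq K lam c :=
            Ideal.mul_mono_left ih
      _ ≤ Tq K lam (k * c + c) := Tq_mul_le lam _ _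
      _ = Tq K lam ((k + 1) * c) := by ring_nf

end Stmt15Aux

namespace Stmt15Aux

open MvPolynomial

variable {K : Type*} [Field K] {n : ℕ} (lam : Fin n → ℕ)

noncomputable def phi (K : Type*) [Field K] {n : ℕ} (lam : Fin n → ℕ) :
    MvPolynomial (Fin n) K →+* Polynomial (MvPolynomial (Fin n) K) :=
  (eval₂Hom (Polynomial.C.comp (C : K →+* MvPolynomial (Fin n) K))
    fun i => Polynomial.monomial (ww lam i) (X i))

lemma phi_monomial (a : Fin n →₀ ℕ) (c : K) :
    phi K lam (monomial a c) = Polynomial.monomial (wdeg lam a) (monomial a c) := by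
  classical
  rw [phi, coe_eval₂Hom, eval₂_monomial]
  rw [Finsupp.prod_fintype _ _ (fun i => pow_zero _)]
  have h1 : ∀ i : Fin n,
      Polynomial.monomial (ww lam i) (X i (R := K)) ^ a i
        = Polynomial.C (X i ^ a i) * Polynomial.X ^ (ww lam i * a i) := by
    intro i
    rw [Polynomial.monomial_pow, Polynomial.C_mul_X_pow_eq_monomial]
  simp_rw [h1]
  rw [Finset.prod_mul_distrib, ← map_prod, Finset.prod_pow_eq_pow_sum]
  rw [RingHom.comp_apply, ← mul_assoc, ← map_mul]
  rw [monomial_eq, Finsupp.prod_fintype _ _ (fun i => pow_zero _)]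
  rw [Polynomial.C_mul_X_pow_eq_monomial]
  rfl

lemma phi_coeff (f : MvPolynomial (Fin n) K) (d : ℕ) :
    (phi K lam f).coeff d
      = ∑ a ∈ f.support, if wdeg lam a = d then monomial a (f.coeff a) else 0 := by
  classical
  conv_lhs => rw [← support_sum_monomial_coeff f, map_sum, Polynomial.finset_sum_coeff]
  refine Finset.sum_congr rfl fun a _ => ?_
  rw [phi_monomial, Polynomial.coeff_monomial]

lemma phi_coeff_ne_zero {f : MvPolynomial (Fin n) K} {a : Fin n →₀ ℕ}
    (ha : a ∈ f.support) : (phi K lam f).coeff (wdeg lam a) ≠ 0 := by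
  classical
  intro h
  have h2 : MvPolynomial.coeff a ((phi K lam f).coeff (wdeg lam a)) = f.coeff a := by
    rw [phi_coeff]
    rw [MvPolynomial.coeff_sum]
    rw [Finset.sum_eq_single a]
    · simp
    · intro b _ hb
      split
      · rw [coeff_monomial, if_neg hb]
      · simp
    · intro h; exact absurd ha h
  rw [h, MvPolynomial.coeff_zero] at h2
  exact MvPolynomial.mem_support_iff.mp ha h2.symm

lemma phi_ne_zero {f : MvPolynomial (Fin n) K} (hf : f ≠ 0) : phi K lam f ≠ 0 := by
  obtain ⟨a, ha⟩ := (MvPolynomial.support_nonempty.mpr hf)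
  intro h
  exact phi_coeff_ne_zero lam ha (by rw [h, Polynomial.coeff_zero])

lemma trailingDegree_le_wdeg {f : MvPolynomial (Fin n) K} {a : Fin n →₀ ℕ}
    (ha : a ∈ f.support) : (phi K lam f).trailingDegree ≤ (wdeg lam a : ℕ∞) :=
  Polynomial.trailingDegree_le_of_ne_zero (phi_coeff_ne_zero lam ha)

lemma le_trailingDegree_of_mem_Tq {c : ℕ} {f : MvPolynomial (Fin n) K}
    (hf : f ∈ Tq K lam c) : (c : ℕ∞) ≤ (phi K lam f).trailingDegree := by
  classical
  by_cases h0 : phi K lam f = 0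
  · rw [h0, Polynomial.trailingDegree_zero]; exact le_top
  have hco : ∀ d : ℕ, d < c → (phi K lam f).coeff d = 0 := by
    intro d hd
    rw [phi_coeff]
    refine Finset.sum_eq_zero fun a ha => ?_
    rw [if_neg]
    intro he
    exact absurd (he ▸ hf a ha) (not_le.mpr hd)
  rw [Polynomial.trailingDegree_eq_natTrailingDegree h0, Nat.cast_le]
  by_contra hlt
  exact Polynomial.coeff_natTrailingDegree_ne_zero.mpr h0
    (hco _ (not_le.mp hlt))

end Stmt15Aux

namespace Stmt15Aux

open MvPolynomial Polynomial

variable {K : Type*} [Field K] {n : ℕ} (lam : Fin n → ℕ)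

lemma trailingDegree_pow' {S : Type*} [CommRing S] [NoZeroDivisors S] [Nontrivial S]
    (p : S[X]) (k : ℕ) : (p ^ k).trailingDegree = k • p.trailingDegree := by
  induction k with
  | zero => simp [Polynomial.trailingDegree_one]
  | succ k ih =>
      rw [pow_succ, Polynomial.trailingDegree_mul, ih, succ_nsmul]

lemma le_trailingDegree_sum {S : Type*} [CommRing S] {ι : Type*} (s : Finset ι)
    (f : ι → S[X]) (c : ℕ∞) (h : ∀ i ∈ s, c ≤ (f i).trailingDegree) :
    c ≤ (∑ i ∈ s, f i).trailingDegree := by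
  by_cases h0 : (∑ i ∈ s, f i) = 0
  · rw [h0, Polynomial.trailingDegree_zero]; exact le_top
  rw [Polynomial.trailingDegree_eq_natTrailingDegree h0]
  by_contra hlt
  push_neg at hlt
  have hco : (∑ i ∈ s, f i).coeff ((∑ i ∈ s, f i).natTrailingDegree) = 0 := by
    rw [Polynomial.finset_sum_coeff]
    refine Finset.sum_eq_zero fun i hi => ?_
    exact Polynomial.coeff_eq_zero_of_lt_trailingDegree (lt_of_lt_of_le hlt (h i hi))
  exact Polynomial.coeff_natTrailingDegree_ne_zero.mpr h0 hco

/-- The key lemma: if `x` is integral over an ideal contained in `Tq c`,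
then `x ∈ Tq c`. -/
lemma key_closure {I : Ideal (MvPolynomial (Fin n) K)} {c : ℕ}
    (hI : I ≤ Tq K lam c) {x : MvPolynomial (Fin n) K}
    (hx : IsIntegralOverIdeal I x) : x ∈ Tq K lam c := by
  classical
  by_cases hx0 : x = 0
  · rw [hx0]; exact (Tq K lam c).zero_mem
  obtain ⟨r, hr, aa, haa, heq⟩ := hx
  have hIk : ∀ k, I ^ k ≤ Tq K lam (k * c) :=
    fun k => le_trans (Ideal.pow_right_mono hI k) (Tq_pow_le lam c k)
  set P := phi K lam x with hP
  have hP0 : P ≠ 0 := phi_ne_zero lam hx0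
  set t := P.natTrailingDegree with ht
  have htd : P.trailingDegree = (t : ℕ∞) := Polynomial.trailingDegree_eq_natTrailingDegree hP0
  -- main claim : c ≤ t
  have hct : c ≤ t := by
    by_contra hct
    push_neg at hct
    -- the equation, pushed through phi
    have h1 : P ^ r = -∑ k ∈ Finset.Icc 1 r, phi K lam (aa k) * P ^ (r - k) := by
      have := congrArg (phi K lam) heq
      rw [map_add, map_pow, map_sum, map_zero] at this
      simp_rw [map_mul, map_pow] at this
      exact eq_neg_of_add_eq_zero_left this
    have hterm : ∀ k ∈ Finset.Icc 1 r,
        ((r * t + 1 : ℕ) : ℕ∞) ≤ (phi K lam (aa k) * P ^ (r - k)).trailingDegree := by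
      intro k hk
      obtain ⟨hk1, hk2⟩ := Finset.mem_Icc.mp hk
      rw [Polynomial.trailingDegree_mul, trailingDegree_pow', htd]
      have hnat : r * t + 1 ≤ k * c + (r - k) * t := by
        have h3 : k * (t + 1) ≤ k * c := Nat.mul_le_mul_left k hct
        have h4 : k * t + 1 ≤ k * (t + 1) := by
          rw [Nat.mul_add, Nat.mul_one]
          exact Nat.add_le_add_left hk1 _
        calc r * t + 1 = k * t + (r - k) * t + 1 := by
              rw [← Nat.add_mul, Nat.add_sub_cancel' hk2]
        _ = (k * t + 1) + (r - k) * t := by ring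
        _ ≤ k * (t + 1) + (r - k) * t := Nat.add_le_add_right h4 _
        _ ≤ k * c + (r - k) * t := Nat.add_le_add_right h3 _
      calc ((r * t + 1 : ℕ) : ℕ∞) ≤ ((k * c + (r - k) * t : ℕ) : ℕ∞) := by
            exact_mod_cast hnat
      _ = ((k * c : ℕ) : ℕ∞) + ((r - k) * t : ℕ) := by push_cast; rfl
      _ ≤ (phi K lam (aa k)).trailingDegree + (r - k) • ((t : ℕ∞)) := by
            refine add_le_add ?_ ?_
            · exact le_trailingDegree_of_mem_Tq lam (hIk k (haa k hk))
            · rw [nsmul_eq_mul]; push_cast; rfl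
    have h2 : ((r * t + 1 : ℕ) : ℕ∞) ≤ (P ^ r).trailingDegree := by
      rw [h1, Polynomial.trailingDegree_neg]
      exact le_trailingDegree_sum _ _ _ hterm
    rw [trailingDegree_pow', htd, nsmul_eq_mul] at h2
    have : ((r * t + 1 : ℕ) : ℕ∞) ≤ ((r * t : ℕ) : ℕ∞) := by
      refine le_trans h2 ?_
      push_cast
      rfl
    exact absurd (by exact_mod_cast this) (by omega)
  -- conclude
  intro a ha
  have := trailingDegree_le_wdeg lam ha
  rw [htd, Nat.cast_le] at this
  exact le_trans hct this

end Stmt15Aux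

namespace Stmt15Aux

open MvPolynomial

variable {K : Type*} [Field K] {n : ℕ} (lam : Fin n → ℕ)

lemma integral_mono {S : Type*} [CommRing S] {I I' : Ideal S} (h : I ≤ I')
    {x : S} (hx : IsIntegralOverIdeal I x) : IsIntegralOverIdeal I' x := by
  obtain ⟨m, hm, a, ha, heq⟩ := hx
  exact ⟨m, hm, a, fun k hk => Ideal.pow_right_mono h k (ha k hk), heq⟩

lemma prod_pow_mem {S : Type*} [CommRing S] (I : Ideal S) {ι : Type*}
    (s : Finset ι) (y : ι → S) (hy : ∀ i ∈ s, y i ∈ I) (c : ι → ℕ) :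
    (∏ i ∈ s, y i ^ c i) ∈ I ^ (∑ i ∈ s, c i) := by
  classical
  induction s using Finset.induction_on with
  | empty => simp [Ideal.one_eq_top]
  | @insert j s' hni ih =>
      rw [Finset.prod_insert hni, Finset.sum_insert hni, pow_add]
      exact Ideal.mul_mem_mul (Ideal.pow_mem_pow (hy j (Finset.mem_insert_self j s')) _)
        (ih fun i hi => hy i (Finset.mem_insert_of_mem hi))

lemma prod_monomial_one {ι : Type*} (s : Finset ι) (u : ι → (Fin n →₀ ℕ)) :
    (∏ i ∈ s, (monomial (u i) (1 : K))) = monomial (∑ i ∈ s, u i) 1 := by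
  classical
  induction s using Finset.induction_on with
  | empty => simp
  | @insert j s' hni ih =>
      rw [Finset.prod_insert hni, Finset.sum_insert hni, ih, monomial_mul, one_mul]

lemma monomial_pow_NN (a : Fin n →₀ ℕ) :
    (monomial a (1 : K)) ^ (NN lam) = ∏ i, ((X i ^ lam i : MvPolynomial (Fin n) K)) ^ (ww lam i * a i) := by
  classical
  simp_rw [X_pow_eq_monomial, monomial_pow, one_pow, prod_monomial_one]
  have hs : NN lam • a = ∑ i, (ww lam i * a i) • Finsupp.single i (lam i) := by
    ext j
    rw [Finsupp.smul_apply, Finsupp.finset_sum_apply]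
    rw [Finset.sum_eq_single j]
    · simp only [Finsupp.smul_apply, Finsupp.single_apply, if_pos rfl, smul_eq_mul, if_true]
      rw [← lam_mul_ww lam j]
      ring
    · intro b _ hb
      simp [Finsupp.single_apply, hb]
    · intro h; exact absurd (Finset.mem_univ j) h
  rw [hs]

lemma X_pow_mem_Jlam (i : Fin n) : (X i ^ lam i : MvPolynomial (Fin n) K) ∈ Jlam K lam := by
  rw [Jlam]
  exact Ideal.subset_span ⟨i, rfl⟩

lemma monomial_mem_pow_J {a : Fin n →₀ ℕ} {d : ℕ}
    (h : NN lam * d ≤ wdeg lam a) :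
    (monomial a (1 : K)) ^ (NN lam) ∈ (Jlam K lam) ^ (NN lam * d) := by
  rw [monomial_pow_NN]
  have h1 : (∏ i, ((X i ^ lam i : MvPolynomial (Fin n) K)) ^ (ww lam i * a i))
      ∈ (Jlam K lam) ^ (wdeg lam a) := by
    refine prod_pow_mem _ _ _ (fun i _ => X_pow_mem_Jlam lam i) _
  exact Ideal.pow_le_pow_right h h1

lemma monomial_integral {a : Fin n →₀ ℕ} {d : ℕ} (hlam : ∀ i, 0 < lam i)
    (h : NN lam * d ≤ wdeg lam a) :
    IsIntegralOverIdeal ((Jlam K lam) ^ d) (monomial a (1 : K)) := by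
  classical
  have hN : 0 < NN lam := NN_pos lam hlam
  refine ⟨NN lam, hN, fun k => if k = NN lam then -(monomial a (1 : K)) ^ (NN lam) else 0,
    ?_, ?_⟩
  · intro k hk
    dsimp only
    split
    · rename_i hkN
      subst hkN
      refine neg_mem ?_
      rw [← pow_mul, Nat.mul_comm d (NN lam)]
      exact monomial_mem_pow_J (K := K) lam h
    · exact Ideal.zero_mem _
  · rw [Finset.sum_eq_single (NN lam)]
    · dsimp only
      rw [if_pos rfl, Nat.sub_self, pow_zero, mul_one, add_neg_cancel]
    · intro b _ hb
      dsimp only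
      rw [if_neg hb, zero_mul]
    · intro hmem
      exact absurd (Finset.mem_Icc.mpr ⟨hN, le_refl _⟩) hmem

lemma Jlam_le_Tq : Jlam K lam ≤ Tq K lam (NN lam) := by
  classical
  rw [Jlam, Ideal.span_le]
  rintro _ ⟨i, rfl⟩
  dsimp only
  intro a ha
  rw [X_pow_eq_monomial, support_monomial] at ha
  simp only [if_neg (one_ne_zero : (1:K) ≠ 0)] at ha
  rw [Finset.mem_singleton] at ha
  subst ha
  rw [wdeg, Finset.sum_eq_single i]
  · rw [Finsupp.single_eq_same, mul_comm, lam_mul_ww]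
  · intro b _ hb; rw [Finsupp.single_eq_of_ne' (Ne.symm hb), mul_zero]
  · intro h; exact absurd (Finset.mem_univ i) h

lemma Ilam_eq_Tq (hlam : ∀ i, 0 < lam i) : Ilam K lam = Tq K lam (NN lam) := by
  refine le_antisymm ?_ ?_
  · rw [Ilam, Ideal.span_le]
    intro x hx
    exact key_closure lam (Jlam_le_Tq lam) hx
  · intro f hf
    rw [← support_sum_monomial_coeff f]
    refine Ideal.sum_mem _ fun a ha => ?_
    have h1 : monomial a (f.coeff a) = MvPolynomial.C (f.coeff a) * monomial a 1 := by
      rw [C_mul_monomial, mul_one]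
    rw [h1]
    refine Ideal.mul_mem_left _ _ ?_
    have hint : IsIntegralOverIdeal (Jlam K lam) (monomial a (1:K)) := by
      have := monomial_integral (K := K) lam hlam (a := a) (d := 1) (by rw [Nat.mul_one]; exact hf a ha)
      rwa [pow_one] at this
    rw [Ilam]
    exact Ideal.subset_span hint

end Stmt15Aux

namespace Stmt15Aux

open MvPolynomial

variable {K : Type*} [Field K] {n : ℕ} (lam : Fin n → ℕ)

lemma coe_symm (g : Fin n → ℕ) : ⇑(Finsupp.equivFunOnFinite.symm g) = g :=
  Finsupp.equivFunOnFinite.apply_symm_apply g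

lemma symm_add (g h : Fin n → ℕ) :
    Finsupp.equivFunOnFinite.symm (g + h)
      = Finsupp.equivFunOnFinite.symm g + Finsupp.equivFunOnFinite.symm h := by
  ext j
  simp [coe_symm]

lemma Mlam_add {u v : (Fin n → ℕ) × ℕ} (hu : u ∈ Mlam lam) (hv : v ∈ Mlam lam) :
    u + v ∈ Mlam lam := by
  have hu' : (u.2 : ℚ) ≤ ∑ i, (u.1 i : ℚ) / (lam i : ℚ) := hu
  have hv' : (v.2 : ℚ) ≤ ∑ i, (v.1 i : ℚ) / (lam i : ℚ) := hv
  show ((u + v).2 : ℚ) ≤ ∑ i, ((u + v).1 i : ℚ) / (lam i : ℚ)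
  have h1 : ∑ i, ((u + v).1 i : ℚ) / (lam i : ℚ)
      = (∑ i, (u.1 i : ℚ) / (lam i : ℚ)) + ∑ i, (v.1 i : ℚ) / (lam i : ℚ) := by
    rw [← Finset.sum_add_distrib]
    refine Finset.sum_congr rfl fun i _ => ?_
    have : (u + v).1 i = u.1 i + v.1 i := rfl
    rw [this]
    push_cast
    ring
  rw [h1]
  have h2 : ((u + v).2 : ℚ) = (u.2 : ℚ) + v.2 := by
    have : (u + v).2 = u.2 + v.2 := rfl
    rw [this]; push_cast; ring
  rw [h2]
  exact add_le_add hu' hv'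

lemma zero_mem_Mlam_fst (c : Fin n → ℕ) : ((c, 0) : (Fin n → ℕ) × ℕ) ∈ Mlam lam := by
  show ((0 : ℕ) : ℚ) ≤ ∑ i, (c i : ℚ) / (lam i : ℚ)
  rw [Nat.cast_zero]
  exact Finset.sum_nonneg fun i _ => div_nonneg (Nat.cast_nonneg _) (Nat.cast_nonneg _)

lemma multiset_mlam_sum (L : Multiset (Fin n → ℕ))
    (h : ∀ b ∈ L, ((b, 1) : (Fin n → ℕ) × ℕ) ∈ Mlam lam) (c : Fin n → ℕ) :
    ((c + L.sum, Multiset.card L) : (Fin n → ℕ) × ℕ) ∈ Mlam lam := by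
  induction L using Multiset.induction_on with
  | empty => simpa using zero_mem_Mlam_fst lam c
  | cons b L ih =>
      have heq : ((c + (b ::ₘ L).sum, Multiset.card (b ::ₘ L)) : (Fin n → ℕ) × ℕ)
          = (b, 1) + (c + L.sum, Multiset.card L) := by
        simp only [Multiset.sum_cons, Multiset.card_cons, Prod.mk_add_mk, Prod.mk.injEq]
        exact ⟨add_left_comm c b L.sum, add_comm _ _⟩
      rw [heq]
      exact Mlam_add lam (h b (Multiset.mem_cons_self b L))
        (ih fun b' hb' => h b' (Multiset.mem_cons_of_mem hb'))

lemma measure_pos {v : (Fin n → ℕ) × ℕ} (hv : v ≠ 0) :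
    0 < (∑ i, v.1 i) + v.2 := by
  by_contra h
  push_neg at h
  apply hv
  have h1 : ∀ i, v.1 i = 0 := by
    intro i
    have := Finset.sum_eq_zero_iff.mp (Nat.le_zero.mp (le_trans (Nat.le_add_right _ _) h))
    exact this i (Finset.mem_univ i)
  have h2 : v.2 = 0 := by omega
  refine Prod.ext (funext h1) h2

/-- Decomposition of elements of `Mlam` into degree-one pieces, assuming all minimal
generators have degree at most one. -/
lemma decomp (hgen : ∀ v, IsMinimalGenerator lam v → v.2 ≤ 1) :
    ∀ (B : ℕ) (v : (Fin n → ℕ) × ℕ), (∑ i, v.1 i) + v.2 ≤ B → v ∈ Mlam lam →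
      ∃ L : Multiset (Fin n → ℕ), Multiset.card L = v.2 ∧
        (∀ b ∈ L, ((b, 1) : (Fin n → ℕ) × ℕ) ∈ Mlam lam) ∧ ∃ c, v.1 = c + L.sum := by
  intro B
  induction B with
  | zero =>
      intro v hB _
      refine ⟨0, by simp only [Multiset.card_zero]; omega, by simp, v.1, by simp⟩
  | succ B ih =>
      intro v hB hv
      by_cases hv2 : v.2 = 0
      · exact ⟨0, by simp [hv2], by simp, v.1, by simp⟩
      have hv0 : v ≠ 0 := by
        intro h; exact hv2 (by rw [h]; rfl)
      by_cases hdec : ∃ u w : (Fin n → ℕ) × ℕ,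
          u ∈ Mlam lam ∧ w ∈ Mlam lam ∧ u ≠ 0 ∧ w ≠ 0 ∧ v = u + w
      · obtain ⟨u, w, hu, hw, hu0, hw0, hvuw⟩ := hdec
        have hsplit : ((∑ i, u.1 i) + u.2) + ((∑ i, w.1 i) + w.2)
            = (∑ i, v.1 i) + v.2 := by
          rw [hvuw]
          have h1 : ∑ i, (u + w).1 i = (∑ i, u.1 i) + ∑ i, w.1 i := by
            rw [← Finset.sum_add_distrib]
            exact Finset.sum_congr rfl fun i _ => rfl
          have h2 : (u + w).2 = u.2 + w.2 := rfl
          rw [h1, h2]; ring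
        have hmu := measure_pos hu0
        have hmw := measure_pos hw0
        obtain ⟨Lu, hLuc, hLum, cu, hcu⟩ := ih u (by omega) hu
        obtain ⟨Lw, hLwc, hLwm, cw, hcw⟩ := ih w (by omega) hw
        refine ⟨Lu + Lw, ?_, ?_, cu + cw, ?_⟩
        · rw [Multiset.card_add, hLuc, hLwc, hvuw]; rfl
        · intro b hb
          rcases Multiset.mem_add.mp hb with h | h
          · exact hLum b h
          · exact hLwm b h
        · have h1 : v.1 = u.1 + w.1 := by rw [hvuw]; rfl
          rw [h1, hcu, hcw, Multiset.sum_add]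
          exact add_add_add_comm _ _ _ _
      · have hmin : IsMinimalGenerator lam v := ⟨hv, hv0, hdec⟩
        have h1 : v.2 = 1 := by have := hgen v hmin; omega
        refine ⟨{v.1}, by simp [h1], ?_, 0, by simp⟩
        intro b hb
        rw [Multiset.mem_singleton] at hb
        subst hb
        have : (v.1, 1) = v := by
          refine Prod.ext rfl h1.symm
        rw [this]
        exact hv

end Stmt15Aux

namespace Stmt15Aux

open MvPolynomial

variable {K : Type*} [Field K] {n : ℕ} (lam : Fin n → ℕ)

lemma monomial_sum_mem_pow (hlam : ∀ i, 0 < lam i) (L : Multiset (Fin n → ℕ))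
    (hL : ∀ b ∈ L, ((b, 1) : (Fin n → ℕ) × ℕ) ∈ Mlam lam) :
    (monomial (Finsupp.equivFunOnFinite.symm L.sum) (1 : K))
      ∈ (Tq K lam (NN lam)) ^ (Multiset.card L) := by
  induction L using Multiset.induction_on with
  | empty =>
      simp only [Multiset.sum_zero, Multiset.card_zero, pow_zero, Ideal.one_eq_top]
      exact Submodule.mem_top
  | cons b L ih =>
      rw [Multiset.sum_cons, Multiset.card_cons, symm_add, ← one_mul (1 : K),
        ← monomial_mul, pow_succ']
      refine Ideal.mul_mem_mul ?_ (ih fun b' hb' => hL b' (Multiset.mem_cons_of_mem hb'))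
      intro a ha
      classical
      rw [support_monomial, if_neg (one_ne_zero : (1:K) ≠ 0), Finset.mem_singleton] at ha
      subst ha
      have hb := (mem_Mlam_iff lam hlam b 1).mp (hL b (Multiset.mem_cons_self b L))
      rw [Nat.mul_one] at hb
      rw [wdeg_coe, coe_symm]
      exact hb

lemma Tq_Nm_le_pow (hlam : ∀ i, 0 < lam i)
    (hgen : ∀ v, IsMinimalGenerator lam v → v.2 ≤ 1) (m : ℕ) :
    Tq K lam (NN lam * m) ≤ (Tq K lam (NN lam)) ^ m := by
  intro f hf
  rw [← support_sum_monomial_coeff f]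
  refine Ideal.sum_mem _ fun a ha => ?_
  have h1 : monomial a (f.coeff a) = MvPolynomial.C (f.coeff a) * monomial a 1 := by
    rw [C_mul_monomial, mul_one]
  rw [h1]
  refine Ideal.mul_mem_left _ _ ?_
  have hmem : ((⇑a, m) : (Fin n → ℕ) × ℕ) ∈ Mlam lam :=
    (mem_Mlam_iff lam hlam ⇑a m).mpr (by rw [← wdeg_coe]; exact hf a ha)
  obtain ⟨L, hLc, hLm, c, hc⟩ :=
    decomp lam hgen ((∑ i, a i) + m) ((⇑a, m) : (Fin n → ℕ) × ℕ) (le_refl _) hmem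
  have ha' : a = Finsupp.equivFunOnFinite.symm c + Finsupp.equivFunOnFinite.symm L.sum := by
    rw [← symm_add, ← hc, Finsupp.equivFunOnFinite_symm_coe]
  rw [ha', ← one_mul (1 : K), ← monomial_mul]
  refine Ideal.mul_mem_left _ _ ?_
  have hLc' : Multiset.card L = m := hLc
  rw [← hLc']
  exact monomial_sum_mem_pow lam hlam L hLm

/-- The "decomposable support" ideal. -/
def Dq (K : Type*) [Field K] {n : ℕ} (lam : Fin n → ℕ) (d : ℕ) :
    Ideal (MvPolynomial (Fin n) K) where
  carrier := {f | ∀ a ∈ f.support, ∃ L : Multiset (Fin n → ℕ),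
    Multiset.card L = d ∧ (∀ b ∈ L, ((b, 1) : (Fin n → ℕ) × ℕ) ∈ Mlam lam) ∧
    ∃ c, ⇑a = c + L.sum}
  add_mem' := by
    classical
    intro f g hf hg a ha
    rcases Finset.mem_union.mp (MvPolynomial.support_add ha) with h | h
    · exact hf a h
    · exact hg a h
  zero_mem' := by simp
  smul_mem' := by
    classical
    intro r f hf a ha
    rw [smul_eq_mul] at ha
    obtain ⟨b, _, b', hb', rfl⟩ := Finset.mem_add.mp (MvPolynomial.support_mul r f ha)
    obtain ⟨L, hLc, hLm, c, hc⟩ := hf b' hb'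
    exact ⟨L, hLc, hLm, ⇑b + c, by
      show ⇑(b + b') = (⇑b + c) + L.sum
      rw [Finsupp.coe_add, hc, add_assoc]⟩

lemma pow_Tq_le_Dq (hlam : ∀ i, 0 < lam i) (d : ℕ) :
    (Tq K lam (NN lam)) ^ d ≤ Dq K lam d := by
  induction d with
  | zero =>
      rw [pow_zero, Ideal.one_eq_top]
      intro f _ a _
      exact ⟨0, by simp, by simp, ⇑a, by simp⟩
  | succ d ih =>
      rw [pow_succ]
      refine Ideal.mul_le.mpr fun f hf g hg => ?_
      intro a ha
      classical
      obtain ⟨b, hb, b', hb', rfl⟩ := Finset.mem_add.mp (MvPolynomial.support_mul f g ha)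
      obtain ⟨L, hLc, hLm, c, hc⟩ := ih hf b hb
      have hb'1 : ((⇑b', 1) : (Fin n → ℕ) × ℕ) ∈ Mlam lam := by
        refine (mem_Mlam_iff lam hlam ⇑b' 1).mpr ?_
        rw [Nat.mul_one, ← wdeg_coe]
        exact hg b' hb'
      refine ⟨⇑b' ::ₘ L, by rw [Multiset.card_cons, hLc], ?_, c, ?_⟩
      · intro x hx
        rcases Multiset.mem_cons.mp hx with h | h
        · subst h; exact hb'1
        · exact hLm x h
      · show ⇑(b + b') = c + (⇑b' ::ₘ L).sum
        rw [Finsupp.coe_add, Multiset.sum_cons, hc]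
        rw [add_comm (⇑b') L.sum, ← add_assoc]

lemma Jlam_le_Ilam (hlam : ∀ i, 0 < lam i) : Jlam K lam ≤ Ilam K lam := by
  rw [Ilam_eq_Tq lam hlam]
  exact Jlam_le_Tq lam

end Stmt15Aux


open Stmt15Aux MvPolynomial in
theorem stmt15 {K : Type*} [Field K] {n : ℕ} (lam : Fin n → ℕ) (hlam : ∀ i, 0 < lam i) :
    IsNormalIdeal (Ilam K lam) ↔
      ∀ v : (Fin n → ℕ) × ℕ, IsMinimalGenerator lam v → v.2 ≤ 1 := by
  constructor
  · -- normal ⇒ every minimal generator has degree ≤ 1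
    intro hnorm v hv
    by_contra h2
    push_neg at h2
    obtain ⟨hvM, hv0, hnd⟩ := hv
    set a := Finsupp.equivFunOnFinite.symm v.1 with ha
    have hwa : NN lam * v.2 ≤ wdeg lam a := by
      rw [wdeg_coe, coe_symm]
      refine (mem_Mlam_iff lam hlam v.1 v.2).mp ?_
      have hveta : ((v.1, v.2) : (Fin n → ℕ) × ℕ) = v := Prod.mk.eta
      rw [hveta]
      exact hvM
    have hint : IsIntegralOverIdeal ((Ilam K lam) ^ v.2) (monomial a (1 : K)) :=
      integral_mono (Ideal.pow_right_mono (Jlam_le_Ilam lam hlam) v.2)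
        (monomial_integral (K := K) lam hlam hwa)
    have hxmem : (monomial a (1 : K)) ∈ (Ilam K lam) ^ v.2 :=
      hnorm v.2 (by omega) _ hint
    rw [Ilam_eq_Tq lam hlam] at hxmem
    have haD := pow_Tq_le_Dq lam hlam v.2 hxmem a (by
      classical
      rw [support_monomial, if_neg (one_ne_zero : (1:K) ≠ 0)]
      exact Finset.mem_singleton_self a)
    obtain ⟨L, hLc, hLm, c, hc⟩ := haD
    have hL0 : L ≠ 0 := by
      intro h
      rw [h, Multiset.card_zero] at hLc
      omega
    obtain ⟨b₁, hb₁⟩ := Multiset.exists_mem_of_ne_zero hL0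
    obtain ⟨L₁, rfl⟩ := Multiset.exists_cons_of_mem hb₁
    apply hnd
    refine ⟨(b₁, 1), (c + L₁.sum, v.2 - 1),
      hLm b₁ (Multiset.mem_cons_self _ _), ?_, ?_, ?_, ?_⟩
    · have hcard : Multiset.card L₁ = v.2 - 1 := by
        rw [Multiset.card_cons] at hLc; omega
      rw [← hcard]
      exact multiset_mlam_sum lam L₁ (fun b hb => hLm b (Multiset.mem_cons_of_mem hb)) c
    · intro h
      exact one_ne_zero (congrArg Prod.snd h)
    · intro h
      have h3 := congrArg Prod.snd h
      simp only [Prod.snd_zero] at h3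
      omega
    · refine Prod.ext ?_ ?_
      · show v.1 = b₁ + (c + L₁.sum)
        have hcv : ⇑a = v.1 := coe_symm v.1
        rw [← hcv, hc, Multiset.sum_cons, add_left_comm]
      · show v.2 = 1 + (v.2 - 1)
        omega
  · -- degree ≤ 1 generators ⇒ normal
    intro hgen m hm x hx
    rw [Ilam_eq_Tq lam hlam] at hx ⊢
    have h1 : (Tq K lam (NN lam)) ^ m ≤ Tq K lam (NN lam * m) := by
      have h := Tq_pow_le (K := K) lam (NN lam) m
      rwa [Nat.mul_comm] at h
    have h2 : x ∈ Tq K lam (NN lam * m) := key_closure lam h1 hx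
    exact Tq_Nm_le_pow lam hlam hgen m h2
end

section
/- Let (a₁,…,aₙ,d) be a minimal generator of M(λ) with d > 0 such that a_i a_j > 0 for some pair of distinct indices i ≠ j. Then 0 ≤ a_i < λ_i for all i = 1,…,n. -/
open Finset

theorem stmt16 {n : ℕ} (lam : Fin n → ℕ) (hlam : ∀ i, 0 < lam i)
    (v : (Fin n → ℕ) × ℕ) (hv : IsMinimalGenerator lam v) (hd : 0 < v.2)
    (hij : ∃ i j : Fin n, i ≠ j ∧ 0 < v.1 i * v.1 j) :
    ∀ i, v.1 i < lam i := by
  by_contra hcon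
  push_neg at hcon
  obtain ⟨k, hk⟩ := hcon
  obtain ⟨hM, hne, hmin⟩ := hv
  -- pick an index m ≠ k with v.1 m > 0
  obtain ⟨i, j, hijne, hpos⟩ := hij
  have hi : 0 < v.1 i := Nat.pos_of_ne_zero fun h => by simp [h] at hpos
  have hj : 0 < v.1 j := Nat.pos_of_ne_zero fun h => by simp [h] at hpos
  obtain ⟨m, hmk, hm⟩ : ∃ m, m ≠ k ∧ 0 < v.1 m := by
    by_cases h : i = k
    · exact ⟨j, fun hjk => hijne (h.trans hjk.symm), hj⟩
    · exact ⟨i, h, hi⟩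
  set u : (Fin n → ℕ) × ℕ := (fun i => if i = k then lam k else 0, 1) with hu
  set w : (Fin n → ℕ) × ℕ := (fun i => v.1 i - (if i = k then lam k else 0), v.2 - 1) with hw
  apply hmin
  refine ⟨u, w, ?_, ?_, ?_, ?_, ?_⟩
  · show (1 : ℚ) ≤ ∑ i, ((if i = k then lam k else 0 : ℕ) : ℚ) / (lam i : ℚ)
    have : ∑ i, ((if i = k then lam k else 0 : ℕ) : ℚ) / (lam i : ℚ)
        = ∑ i, (if i = k then (lam k : ℚ) / (lam k : ℚ) else 0) := by
      apply Finset.sum_congr rfl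
      intro x _
      split_ifs with h
      · subst h; norm_num
      · norm_num
    rw [this, Finset.sum_ite_eq' univ k (fun _ => (lam k : ℚ) / (lam k : ℚ))]
    simp [div_self (by exact_mod_cast (hlam k).ne' : (lam k : ℚ) ≠ 0)]
  · show ((v.2 - 1 : ℕ) : ℚ) ≤ ∑ i, ((v.1 i - (if i = k then lam k else 0) : ℕ) : ℚ) / (lam i : ℚ)
    have hcast : ∀ i, ((v.1 i - (if i = k then lam k else 0) : ℕ) : ℚ)
        = (v.1 i : ℚ) - (if i = k then (lam k : ℚ) else 0) := by
      intro x
      split_ifs with h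
      · subst h; exact Nat.cast_sub hk
      · simp
    have hsum : ∑ i, ((v.1 i - (if i = k then lam k else 0) : ℕ) : ℚ) / (lam i : ℚ)
        = (∑ i, (v.1 i : ℚ) / (lam i : ℚ)) - 1 := by
      rw [show (1 : ℚ) = ∑ i, (if i = k then (lam k : ℚ) / (lam k : ℚ) else 0) by
        rw [Finset.sum_ite_eq' univ k (fun _ => (lam k : ℚ) / (lam k : ℚ))]
        simp [div_self (by exact_mod_cast (hlam k).ne' : (lam k : ℚ) ≠ 0)],
        ← Finset.sum_sub_distrib]
      apply Finset.sum_congr rfl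
      intro x _
      rw [hcast x]
      split_ifs with h
      · subst h; ring
      · ring
    rw [hsum, Nat.cast_sub hd]
    have hM' : (v.2 : ℚ) ≤ ∑ i, (v.1 i : ℚ) / (lam i : ℚ) := hM
    push_cast
    linarith
  · intro h
    have := congrArg Prod.snd h
    simp [hu] at this
  · intro h
    have := congrArg (fun p => p.1 m) h
    simp [hw, hmk] at this
    omega
  · refine Prod.ext ?_ ?_
    · funext x
      show v.1 x = (if x = k then lam k else 0) + (v.1 x - (if x = k then lam k else 0))
      split_ifs with h
      · subst h; omega
      · omega
    · show v.2 = 1 + (v.2 - 1)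
      omega
end

section
/- Suppose n ≥ 2. Then every minimal generator (a₁,…,aₙ,d) of M(λ) satisfies d < n. -/
open Finset

theorem stmt17 {n : ℕ} (hn : 2 ≤ n) (lam : Fin n → ℕ) (hlam : ∀ i, 0 < lam i)
    (v : (Fin n → ℕ) × ℕ) (hv : IsMinimalGenerator lam v) :
    v.2 < n := by
  obtain ⟨hvM, hv0, hnot⟩ := hv
  by_contra hge
  push_neg at hge
  simp only [Mlam, Set.mem_setOf_eq] at hvM
  -- there is a coordinate with lam i ≤ v.1 i
  have hex : ∃ i, lam i ≤ v.1 i := by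
    by_contra h
    push_neg at h
    have hsum : ∑ i, (v.1 i : ℚ) / (lam i : ℚ) < n := by
      have hne : (Finset.univ : Finset (Fin n)).Nonempty := by
        rw [Finset.univ_nonempty_iff]
        exact Fin.pos_iff_nonempty.mp (by omega)
      calc ∑ i, (v.1 i : ℚ) / (lam i : ℚ) < ∑ _i : Fin n, (1 : ℚ) := by
            apply Finset.sum_lt_sum_of_nonempty hne
            intro i _
            rw [div_lt_one (by exact_mod_cast hlam i)]
            exact_mod_cast h i
        _ = n := by simp
    have hlt : (v.2 : ℚ) < n := lt_of_le_of_lt hvM hsum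
    have : v.2 < n := by exact_mod_cast hlt
    omega
  obtain ⟨i, hi⟩ := hex
  set b : Fin n → ℕ := fun j => if j = i then lam i else 0 with hb
  have hble : ∀ j, b j ≤ v.1 j := by
    intro j
    by_cases hj : j = i
    · subst hj; simp [hb, hi]
    · simp [hb, hj]
  have hlami : ((lam i : ℚ)) ≠ 0 := by exact_mod_cast (hlam i).ne'
  have hbsum : ∑ j, (b j : ℚ) / (lam j : ℚ) = 1 := by
    rw [Finset.sum_eq_single i]
    · simp [hb, div_self hlami]
    · intro j _ hj; simp [hb, hj]
    · simp
  apply hnot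
  refine ⟨(b, 1), (fun j => v.1 j - b j, v.2 - 1), ?_, ?_, ?_, ?_, ?_⟩
  · simp [Mlam, hbsum]
  · simp only [Mlam, Set.mem_setOf_eq]
    have hcast : ∀ j, ((v.1 j - b j : ℕ) : ℚ) = (v.1 j : ℚ) - (b j : ℚ) := by
      intro j; exact_mod_cast Nat.cast_sub (hble j)
    have hsum2 : ∑ j, ((v.1 j - b j : ℕ) : ℚ) / (lam j : ℚ)
        = (∑ j, (v.1 j : ℚ) / (lam j : ℚ)) - 1 := by
      rw [← hbsum, ← Finset.sum_sub_distrib]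
      apply Finset.sum_congr rfl
      intro j _
      rw [hcast, sub_div]
    rw [hsum2]
    have h2 : ((v.2 - 1 : ℕ) : ℚ) = (v.2 : ℚ) - 1 := by
      have : 1 ≤ v.2 := by omega
      rw [Nat.cast_sub this, Nat.cast_one]
    rw [h2]
    linarith
  · intro h
    have := congrArg Prod.snd h
    simp at this
  · intro h
    have := congrArg Prod.snd h
    simp only [Prod.snd_zero] at this
    omega
  · apply Prod.ext
    · funext j
      simp only [Prod.fst_add, Pi.add_apply]
      have := hble j
      omega
    · simp only [Prod.snd_add]
      omega
end

section
/- Let ℓ = lcm(λ₁,…,λ_{n−1}) and λ' = (λ₁,…,λ_{n−1},λₙ+ℓ). Let (a₁,…,aₙ,d) be a minimal generator of M(λ) with aₙ > 0 and d > 0, and set δ = dℓ − (ℓ/λ₁)a₁ − ⋯ − (ℓ/λ_{n−1})a_{n−1} (an integer). Then aₙ + δ is the smallest integer a'ₙ such that a₁/λ₁ + ⋯ + a_{n−1}/λ_{n−1} + a'ₙ/(λₙ+ℓ) ≥ d, and (a₁,…,a_{n−1},aₙ+δ,d) is a minimal generator of M(λ') with aₙ + δ > 0. -/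
open Finset

lemma mem_Mlam_iff {n : ℕ} (lam : Fin (n+1) → ℕ) (v : (Fin (n+1) → ℕ) × ℕ) :
    v ∈ Mlam lam ↔ (v.2 : ℚ) ≤
      (∑ i : Fin n, (v.1 i.castSucc : ℚ) / (lam i.castSucc : ℚ)) +
        (v.1 (Fin.last n) : ℚ) / (lam (Fin.last n) : ℚ) := by
  simp [Mlam, Fin.sum_univ_castSucc]

-- cast of the integer "defect" to ℚ
lemma defect_cast {n : ℕ} (lam : Fin (n+1) → ℕ) (hlam : ∀ i, 0 < lam i) (ℓ : ℕ)
    (hdvd : ∀ i : Fin n, lam i.castSucc ∣ ℓ) (b : Fin (n+1) → ℕ) (e : ℕ) :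
    (((e : ℤ) * ℓ - ∑ i : Fin n, ((ℓ / lam i.castSucc : ℕ) : ℤ) * (b i.castSucc : ℤ) : ℤ) : ℚ)
      = (ℓ : ℚ) * ((e : ℚ) - ∑ i : Fin n, (b i.castSucc : ℚ) / (lam i.castSucc : ℚ)) := by
  have hterm : ∀ i : Fin n, ((ℓ / lam i.castSucc : ℕ) : ℚ) = (ℓ : ℚ) / (lam i.castSucc : ℚ) :=
    fun i => Nat.cast_div (hdvd i) (by exact_mod_cast (hlam i.castSucc).ne')
  have h : (∑ i : Fin n, (((((ℓ / lam i.castSucc : ℕ) : ℤ) * (b i.castSucc : ℤ) : ℤ)) : ℚ))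
      = ∑ i : Fin n, (ℓ : ℚ) * ((b i.castSucc : ℚ) / (lam i.castSucc : ℚ)) := by
    refine Finset.sum_congr rfl fun i _ => ?_
    have h0 : (lam i.castSucc : ℚ) ≠ 0 := by exact_mod_cast (hlam i.castSucc).ne'
    rw [Int.cast_mul, Int.cast_natCast, Int.cast_natCast, hterm i]
    field_simp
  rw [Int.cast_sub, Int.cast_mul, Int.cast_natCast, Int.cast_natCast, Int.cast_sum, h,
    mul_sub, Finset.mul_sum, mul_comm (e:ℚ) (ℓ:ℚ)]

lemma pull_back {n : ℕ} (lam : Fin (n+1) → ℕ) (hlam : ∀ i, 0 < lam i) (ℓ : ℕ)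
    (hdvd : ∀ i : Fin n, lam i.castSucc ∣ ℓ)
    (u : (Fin (n+1) → ℕ) × ℕ)
    (hu : u ∈ Mlam (Function.update lam (Fin.last n) (lam (Fin.last n) + ℓ))) :
    ∃ u' : (Fin (n+1) → ℕ) × ℕ, u' ∈ Mlam lam ∧
      (∀ i : Fin n, u'.1 i.castSucc = u.1 i.castSucc) ∧ u'.2 = u.2 ∧
      (u'.1 (Fin.last n) : ℤ) = (u.1 (Fin.last n) : ℤ) -
        ((u.2 : ℤ) * ℓ - ∑ i : Fin n, ((ℓ / lam i.castSucc : ℕ) : ℤ) * (u.1 i.castSucc : ℤ)) ∧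
      (u' = 0 → u = 0) := by
  obtain ⟨b, e⟩ := u
  set L := Fin.last n with hL
  set D : ℤ := (e : ℤ) * ℓ - ∑ i : Fin n, ((ℓ / lam i.castSucc : ℕ) : ℤ) * (b i.castSucc : ℤ)
    with hD
  set S : ℚ := ∑ i : Fin n, (b i.castSucc : ℚ) / (lam i.castSucc : ℚ) with hS
  have hDQ : (D : ℚ) = (ℓ : ℚ) * ((e : ℚ) - S) := defect_cast lam hlam ℓ hdvd b e
  have hlamL : (0:ℚ) < (lam L : ℚ) := by exact_mod_cast hlam L
  have hℓ0 : (0:ℚ) ≤ (ℓ : ℚ) := by positivity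
  -- membership hypothesis rewritten
  rw [mem_Mlam_iff] at hu
  simp only at hu
  have hne : ∀ i : Fin n, i.castSucc ≠ L := fun i => (Fin.castSucc_lt_last i).ne
  rw [Function.update_self] at hu
  have hSrw : (∑ i : Fin n, (b i.castSucc : ℚ) /
      ((Function.update lam L (lam L + ℓ)) i.castSucc : ℚ)) = S := by
    refine Finset.sum_congr rfl fun i _ => ?_
    rw [Function.update_of_ne (hne i)]
  rw [hSrw] at hu
  -- key inequality: b L ≥ (lam L + ℓ) * (e - S)
  have hlamLℓ : (0:ℚ) < (lam L : ℚ) + (ℓ:ℚ) := by linarith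
  have hu' : (e:ℚ) ≤ S + (b L : ℚ) / ((lam L : ℚ) + (ℓ:ℚ)) := by push_cast at hu; exact hu
  have hkey : ((lam L : ℚ) + ℓ) * ((e:ℚ) - S) ≤ (b L : ℚ) := by
    rw [← sub_le_iff_le_add'] at hu'
    calc ((lam L : ℚ) + ℓ) * ((e:ℚ) - S) ≤ ((lam L : ℚ) + ℓ) * ((b L : ℚ) / ((lam L : ℚ) + ℓ)) := by
          exact mul_le_mul_of_nonneg_left hu' hlamLℓ.le
      _ = (b L : ℚ) := by field_simp
  -- b L - D ≥ lam L * (e - S) and ≥ 0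
  have h1 : (lam L : ℚ) * ((e:ℚ) - S) ≤ (b L : ℚ) - (D : ℚ) := by
    rw [hDQ]; nlinarith
  have h2 : (0:ℤ) ≤ (b L : ℤ) - D := by
    rcases le_or_gt (0:ℚ) ((e:ℚ) - S) with h | h
    · have : (0:ℚ) ≤ (b L : ℚ) - (D:ℚ) := le_trans (by positivity) h1
      exact_mod_cast this
    · have : (D:ℚ) ≤ 0 := by rw [hDQ]; nlinarith
      have hD0 : D ≤ 0 := by exact_mod_cast this
      have : (0:ℤ) ≤ (b L : ℤ) := Int.ofNat_nonneg _
      omega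
  refine ⟨(Function.update b L ((b L : ℤ) - D).toNat, e), ?_, ?_, rfl, ?_, ?_⟩
  · rw [mem_Mlam_iff]
    simp only
    have hSrw2 : (∑ i : Fin n, ((Function.update b L ((b L : ℤ) - D).toNat) i.castSucc : ℚ) /
        (lam i.castSucc : ℚ)) = S := by
      refine Finset.sum_congr rfl fun i _ => ?_
      rw [Function.update_of_ne (hne i)]
    rw [hSrw2, Function.update_self]
    have hcast : (((((b L : ℤ) - D).toNat : ℕ)) : ℚ) = (b L : ℚ) - (D : ℚ) := by
      have h := Int.toNat_of_nonneg h2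
      exact_mod_cast congrArg (fun z : ℤ => (z : ℚ)) h
    rw [hcast, ← sub_le_iff_le_add', le_div_iff₀ hlamL]
    nlinarith [h1]
  · intro i; exact Function.update_of_ne (hne i) _ _
  · simp only [Function.update_self]
    rw [Int.toNat_of_nonneg h2]
  · intro h0
    have he : e = 0 := congrArg Prod.snd h0
    have hb : ∀ i : Fin (n+1), (Function.update b L ((b L : ℤ) - D).toNat) i = 0 := by
      intro i; exact congrFun (congrArg Prod.fst h0) i
    have hbc : ∀ i : Fin n, b i.castSucc = 0 := by
      intro i; have := hb i.castSucc; rwa [Function.update_of_ne (hne i)] at this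
    have hD0 : D = 0 := by
      rw [hD, he]
      simp only [Nat.cast_zero, zero_mul, zero_sub, neg_eq_zero]
      refine Finset.sum_eq_zero fun i _ => ?_
      rw [hbc i]; simp
    have hbL : b L = 0 := by
      have := hb L
      rw [Function.update_self, hD0] at this
      simpa using this
    ext i
    · exact Fin.lastCases hbL hbc i
    · exact he

theorem stmt18 {n : ℕ} (lam : Fin (n + 1) → ℕ) (hlam : ∀ i, 0 < lam i)
    (ℓ : ℕ) (hℓ : ℓ = (Finset.univ : Finset (Fin n)).lcm (fun i => lam i.castSucc))
    (lam' : Fin (n + 1) → ℕ)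
    (hlam' : lam' = Function.update lam (Fin.last n) (lam (Fin.last n) + ℓ))
    (a : Fin (n + 1) → ℕ) (d : ℕ) (hmin : IsMinimalGenerator lam (a, d))
    (han : 0 < a (Fin.last n)) (hd : 0 < d)
    (δ : ℤ)
    (hδ : δ = (d : ℤ) * ℓ -
      ∑ i : Fin n, ((ℓ / lam i.castSucc : ℕ) : ℤ) * (a i.castSucc : ℤ)) :
    IsLeast {z : ℤ | (d : ℚ) ≤
        (∑ i : Fin n, (a i.castSucc : ℚ) / (lam i.castSucc : ℚ)) +
          (z : ℚ) / ((lam (Fin.last n) : ℚ) + (ℓ : ℚ))}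
      ((a (Fin.last n) : ℤ) + δ) ∧
    0 < (a (Fin.last n) : ℤ) + δ ∧
    ∃ a' : Fin (n + 1) → ℕ,
      (∀ i : Fin n, a' i.castSucc = a i.castSucc) ∧
      (a' (Fin.last n) : ℤ) = (a (Fin.last n) : ℤ) + δ ∧
      IsMinimalGenerator lam' (a', d) := by
  set L := Fin.last n with hLdef
  set S : ℚ := ∑ i : Fin n, (a i.castSucc : ℚ) / (lam i.castSucc : ℚ) with hS
  have hne : ∀ i : Fin n, i.castSucc ≠ L := fun i => (Fin.castSucc_lt_last i).ne
  have hdvd : ∀ i : Fin n, lam i.castSucc ∣ ℓ := fun i => hℓ ▸ Finset.dvd_lcm (Finset.mem_univ i)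
  have hℓpos : 0 < ℓ := by
    rcases Nat.eq_zero_or_pos ℓ with h | h
    · exfalso
      rw [h] at hℓ
      have := hℓ.symm
      rw [Finset.lcm_eq_zero_iff] at this
      obtain ⟨i, -, hi⟩ := Set.mem_image _ _ _ |>.mp this
      exact (hlam i.castSucc).ne' hi
    · exact h
  have hlamL : (0:ℚ) < (lam L : ℚ) := by exact_mod_cast hlam L
  have hℓQ : (0:ℚ) < (ℓ : ℚ) := by exact_mod_cast hℓpos
  have hlamLℓ : (0:ℚ) < (lam L : ℚ) + (ℓ:ℚ) := by linarith
  have hδQ : (δ : ℚ) = (ℓ : ℚ) * ((d : ℚ) - S) := by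
    rw [hδ]; exact defect_cast lam hlam ℓ hdvd a d
  obtain ⟨hmem0, hne0, hnodec⟩ := hmin
  have hmem : (d:ℚ) ≤ S + (a L : ℚ) / (lam L : ℚ) := (mem_Mlam_iff lam (a, d)).1 hmem0
  -- minimality of a L : cannot lower the last coordinate
  have hlt : S + ((a L : ℚ) - 1) / (lam L : ℚ) < (d:ℚ) := by
    by_contra hcon
    push_neg at hcon
    apply hnodec
    refine ⟨(Function.update a L (a L - 1), d), (Function.update (0 : Fin (n+1) → ℕ) L 1, 0),
      ?_, ?_, ?_, ?_, ?_⟩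
    · rw [mem_Mlam_iff]
      simp only
      have h1 : (∑ i : Fin n, ((Function.update a L (a L - 1)) i.castSucc : ℚ) /
          (lam i.castSucc : ℚ)) = S := by
        refine Finset.sum_congr rfl fun i _ => ?_
        rw [Function.update_of_ne (hne i)]
      rw [h1, Function.update_self]
      have h2 : ((a L - 1 : ℕ) : ℚ) = (a L : ℚ) - 1 := by
        rw [Nat.cast_sub han, Nat.cast_one]
      rw [h2]
      exact hcon
    · rw [mem_Mlam_iff]
      simp only
      refine le_trans (by norm_num) (add_nonneg (Finset.sum_nonneg fun i _ => by positivity)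
        (by positivity))
    · intro h
      exact hd.ne' (congrArg Prod.snd h)
    · intro h
      have := congrFun (congrArg Prod.fst h) L
      simp at this
    · ext i
      · simp only [Prod.fst_add, Pi.add_apply]
        rcases eq_or_ne i L with rfl | hi
        · rw [Function.update_self, Function.update_self]
          omega
        · rw [Function.update_of_ne hi, Function.update_of_ne hi, Pi.zero_apply, add_zero]
      · simp
  -- consequences
  have hfloor : (a L : ℚ) - 1 < (lam L : ℚ) * ((d:ℚ) - S) := by
    have hlt' : ((a L : ℚ) - 1) / (lam L : ℚ) < (d:ℚ) - S := by linarith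
    calc (a L : ℚ) - 1 = (((a L : ℚ) - 1) / (lam L : ℚ)) * (lam L : ℚ) := by field_simp
      _ < ((d:ℚ) - S) * (lam L : ℚ) := mul_lt_mul_of_pos_right hlt' hlamL
      _ = (lam L : ℚ) * ((d:ℚ) - S) := mul_comm _ _
  have h1a : (1:ℚ) ≤ (a L : ℚ) := by exact_mod_cast han
  have hdS : (0:ℚ) < (d:ℚ) - S := by
    by_contra h
    push_neg at h
    have := mul_nonpos_iff.mpr (Or.inr ⟨h, hlamL.le⟩)
    linarith
  have hδpos : 0 < δ := by
    have : (0:ℚ) < (δ : ℚ) := by rw [hδQ]; positivity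
    exact_mod_cast this
  have hmem' : ((d:ℚ) - S) * (lam L : ℚ) ≤ (a L : ℚ) := by
    rw [← le_div_iff₀ hlamL]
    linarith [hmem]
  -- the common membership inequality for the new vector
  have hmem1 : (d:ℚ) ≤ S + ((a L : ℚ) + (δ:ℚ)) / ((lam L : ℚ) + (ℓ:ℚ)) := by
    rw [← sub_le_iff_le_add', le_div_iff₀ hlamLℓ]
    nlinarith [hmem', hδQ]
  refine ⟨⟨?_, ?_⟩, ?_, ?_⟩
  · -- membership in the IsLeast set
    show (d : ℚ) ≤ S + (((a L : ℤ) + δ : ℤ) : ℚ) / ((lam L : ℚ) + (ℓ : ℚ))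
    push_cast
    exact hmem1
  · -- lower bound
    intro z hz
    have hz' : (d : ℚ) ≤ S + (z : ℚ) / ((lam L : ℚ) + (ℓ : ℚ)) := hz
    have h1 : ((d:ℚ) - S) * ((lam L : ℚ) + (ℓ:ℚ)) ≤ (z : ℚ) := by
      rw [← le_div_iff₀ hlamLℓ]
      linarith
    have h2 : ((a L : ℚ) - 1) + (δ:ℚ) < (z:ℚ) := by nlinarith [hfloor, hδQ]
    have h3 : ((a L : ℤ) + δ - 1 : ℤ) < z := by
      have : (((a L : ℤ) + δ - 1 : ℤ) : ℚ) < (z:ℚ) := by push_cast; linarith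
      exact_mod_cast this
    omega
  · have : (0:ℤ) < (a L : ℤ) := by exact_mod_cast han
    omega
  · -- the new minimal generator
    refine ⟨Function.update a L (a L + δ.toNat), fun i => Function.update_of_ne (hne i) _ _, ?_, ?_, ?_, ?_⟩
    · rw [Function.update_self]
      push_cast
      rw [Int.toNat_of_nonneg hδpos.le]
    · -- membership in Mlam lam'
      rw [mem_Mlam_iff]
      simp only
      have h1 : (∑ i : Fin n, ((Function.update a L (a L + δ.toNat)) i.castSucc : ℚ) /
          (lam' i.castSucc : ℚ)) = S := by
        refine Finset.sum_congr rfl fun i _ => ?_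
        rw [Function.update_of_ne (hne i), hlam', Function.update_of_ne (hne i)]
      rw [h1, Function.update_self, hlam', Function.update_self]
      have hδt : ((δ.toNat : ℕ) : ℚ) = (δ : ℚ) := by
        exact_mod_cast congrArg (fun z : ℤ => (z:ℚ)) (Int.toNat_of_nonneg hδpos.le)
      have h2 : ((a L + δ.toNat : ℕ) : ℚ) = (a L : ℚ) + (δ:ℚ) := by
        push_cast
        rw [hδt]
      rw [h2]
      push_cast
      exact hmem1
    · intro h
      exact hd.ne' (congrArg Prod.snd h)
    · rintro ⟨u, w, hu, hw, hu0, hw0, heq⟩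
      rw [hlam'] at hu hw
      obtain ⟨u', hu'mem, hu'c, hu'2, hu'L, hu'0⟩ := pull_back lam hlam ℓ hdvd u hu
      obtain ⟨w', hw'mem, hw'c, hw'2, hw'L, hw'0⟩ := pull_back lam hlam ℓ hdvd w hw
      apply hnodec
      refine ⟨u', w', hu'mem, hw'mem, fun h => hu0 (hu'0 h), fun h => hw0 (hw'0 h), ?_⟩
      have hsnd : d = u.2 + w.2 := congrArg Prod.snd heq
      have hfst : ∀ i, (Function.update a L (a L + δ.toNat)) i = u.1 i + w.1 i :=
        fun i => congrFun (congrArg Prod.fst heq) i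
      have hfstc : ∀ i : Fin n, a i.castSucc = u.1 i.castSucc + w.1 i.castSucc := by
        intro i
        have := hfst i.castSucc
        rwa [Function.update_of_ne (hne i)] at this
      have hfstL : a L + δ.toNat = u.1 L + w.1 L := by
        have := hfst L
        rwa [Function.update_self] at this
      ext i
      · simp only [Prod.fst_add, Pi.add_apply]
        refine Fin.lastCases ?_ (fun i => by rw [hfstc i, hu'c i, hw'c i]) i
        -- last coordinate, via ℤ
        have hcast : ((u'.1 L : ℤ) + (w'.1 L : ℤ)) = (a L : ℤ) := by
          rw [hu'L, hw'L]
          have hDsum : ((u.2 : ℤ) * ℓ - ∑ i : Fin n, ((ℓ / lam i.castSucc : ℕ) : ℤ) * (u.1 i.castSucc : ℤ))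
              + ((w.2 : ℤ) * ℓ - ∑ i : Fin n, ((ℓ / lam i.castSucc : ℕ) : ℤ) * (w.1 i.castSucc : ℤ)) = δ := by
            have hsum : ∀ i ∈ (Finset.univ : Finset (Fin n)), ((ℓ / lam i.castSucc : ℕ) : ℤ) * (a i.castSucc : ℤ)
                = ((ℓ / lam i.castSucc : ℕ) : ℤ) * (u.1 i.castSucc : ℤ)
                  + ((ℓ / lam i.castSucc : ℕ) : ℤ) * (w.1 i.castSucc : ℤ) := by
              intro i _
              rw [hfstc i]
              push_cast
              ring
            rw [hδ, hsnd, Nat.cast_add, Finset.sum_congr rfl hsum, Finset.sum_add_distrib]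
            ring
          have hLsum : (u.1 L : ℤ) + (w.1 L : ℤ) = (a L : ℤ) + δ := by
            have h' := congrArg (fun m : ℕ => (m : ℤ)) hfstL
            simp only [Nat.cast_add] at h'
            rw [Int.toNat_of_nonneg hδpos.le] at h'
            linarith
          linarith [hDsum, hLsum]
        exact_mod_cast hcast.symm
      · simp only [Prod.snd_add]
        rw [hu'2, hw'2, hsnd]
end

section
/- Let ℓ = lcm(λ₁,…,λ_{n−1}) and λ' = (λ₁,…,λ_{n−1},λₙ+ℓ), and suppose λₙ ≥ ℓ. Let (a₁,…,a_{n−1},a'ₙ,d) be a minimal generator of M(λ') with a'ₙ > 0 and d > 0, and set δ = dℓ − (ℓ/λ₁)a₁ − ⋯ − (ℓ/λ_{n−1})a_{n−1}. Then a'ₙ − δ > 0 and (a₁,…,a_{n−1},a'ₙ−δ,d) is a minimal generator of M(λ). -/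
open Finset

lemma mem_Mlam_iff_s19 {n : ℕ} (μ : Fin (n+1) → ℕ) (hμ : ∀ i, 0 < μ i) (ℓ : ℕ) (hl : 0 < ℓ)
    (c : Fin n → ℕ) (hc : ∀ i, c i * μ i.castSucc = ℓ) (v : Fin (n+1) → ℕ) (g : ℕ) :
    (v, g) ∈ Mlam μ ↔
      ((g : ℤ) * ℓ - ∑ i : Fin n, (c i : ℤ) * (v i.castSucc : ℤ)) *
          (μ (Fin.last n) : ℤ) ≤ (ℓ : ℤ) * (v (Fin.last n) : ℤ) := by
  have hμn : (0:ℚ) < μ (Fin.last n) := by exact_mod_cast hμ _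
  have hlq : (0:ℚ) < ℓ := by exact_mod_cast hl
  unfold Mlam
  simp only [Set.mem_setOf_eq]
  rw [Fin.sum_univ_castSucc]
  have hterm : ∀ i ∈ Finset.univ, (v (Fin.castSucc i) : ℚ) / (μ (Fin.castSucc i) : ℚ)
      = (c i : ℚ) * (v i.castSucc : ℚ) / (ℓ : ℚ) := by
    intro i _
    have h1 : (c i : ℚ) * (μ i.castSucc : ℚ) = (ℓ:ℚ) := by
      exact_mod_cast congrArg (Nat.cast : ℕ → ℚ) (hc i)
    have hμi : (0:ℚ) < μ i.castSucc := by exact_mod_cast hμ _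
    rw [div_eq_div_iff (ne_of_gt hμi) (ne_of_gt hlq), ← h1]; ring
  rw [Finset.sum_congr rfl hterm, ← Finset.sum_div,
    div_add_div _ _ (ne_of_gt hlq) (ne_of_gt hμn), le_div_iff₀ (by positivity)]
  have hcast : ((∑ i : Fin n, (c i : ℤ) * (v i.castSucc : ℤ) : ℤ) : ℚ)
      = ∑ i : Fin n, (c i : ℚ) * (v i.castSucc : ℚ) := by push_cast; rfl
  constructor
  · intro h
    have h2 : ((g : ℚ) * ℓ - ∑ i : Fin n, (c i : ℚ) * (v i.castSucc : ℚ)) *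
        (μ (Fin.last n) : ℚ) ≤ (ℓ : ℚ) * (v (Fin.last n) : ℚ) := by nlinarith [h]
    rw [← hcast] at h2
    exact_mod_cast h2
  · intro h
    have h2 : (((g : ℤ) * ℓ - ∑ i : Fin n, (c i : ℤ) * (v i.castSucc : ℤ)) *
        (μ (Fin.last n) : ℤ) : ℚ) ≤ ((ℓ : ℤ) * (v (Fin.last n) : ℤ) : ℚ) := by exact_mod_cast h
    push_cast [hcast] at h2
    nlinarith [h2]

theorem stmt19 {n : ℕ} (lam : Fin (n + 1) → ℕ) (hlam : ∀ i, 0 < lam i)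
    (ℓ : ℕ) (hℓ : ℓ = (Finset.univ : Finset (Fin n)).lcm (fun i => lam i.castSucc))
    (hln : ℓ ≤ lam (Fin.last n))
    (lam' : Fin (n + 1) → ℕ)
    (hlam' : lam' = Function.update lam (Fin.last n) (lam (Fin.last n) + ℓ))
    (a' : Fin (n + 1) → ℕ) (d : ℕ) (hmin : IsMinimalGenerator lam' (a', d))
    (han : 0 < a' (Fin.last n)) (hd : 0 < d)
    (δ : ℤ)
    (hδ : δ = (d : ℤ) * ℓ -
      ∑ i : Fin n, ((ℓ / lam i.castSucc : ℕ) : ℤ) * (a' i.castSucc : ℤ)) :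
    0 < (a' (Fin.last n) : ℤ) - δ ∧
    ∃ a : Fin (n + 1) → ℕ,
      (∀ i : Fin n, a i.castSucc = a' i.castSucc) ∧
      (a (Fin.last n) : ℤ) = (a' (Fin.last n) : ℤ) - δ ∧
      IsMinimalGenerator lam (a, d) := by
  -- basic facts
  have hdvd : ∀ i : Fin n, lam i.castSucc ∣ ℓ := by
    intro i; rw [hℓ]; exact Finset.dvd_lcm (mem_univ i)
  have hl0 : 0 < ℓ := by
    rcases Nat.eq_zero_or_pos ℓ with h | h
    · exfalso
      rw [hℓ] at h
      rw [Finset.lcm_eq_zero_iff] at h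
      obtain ⟨i, -, hi⟩ := h
      exact (hlam i.castSucc).ne' hi
    · exact h
  set c : Fin n → ℕ := fun i => ℓ / lam i.castSucc with hcdef
  have hc : ∀ i, c i * lam i.castSucc = ℓ := fun i => Nat.div_mul_cancel (hdvd i)
  have hc1 : ∀ i, 1 ≤ c i := fun i =>
    Nat.div_pos (Nat.le_of_dvd hl0 (hdvd i)) (hlam i.castSucc)
  have hdS : δ = (d : ℤ) * ℓ - ∑ i : Fin n, (c i : ℤ) * (a' i.castSucc : ℤ) := hδ
  clear_value c
  have hlam'cs : ∀ i : Fin n, lam' i.castSucc = lam i.castSucc := by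
    intro i; rw [hlam']; exact Function.update_of_ne (Fin.castSucc_lt_last i).ne _ _
  have hlam'last : lam' (Fin.last n) = lam (Fin.last n) + ℓ := by
    rw [hlam']; exact Function.update_self _ _ _
  have hlam'pos : ∀ i, 0 < lam' i := by
    intro i
    rcases eq_or_ne i (Fin.last n) with h | h
    · rw [h, hlam'last]; have := hlam (Fin.last n); omega
    · rw [hlam', Function.update_of_ne h]; exact hlam i
  have hc' : ∀ i, c i * lam' i.castSucc = ℓ := fun i => by rw [hlam'cs]; exact hc i
  have memb := mem_Mlam_iff_s19 lam hlam ℓ hl0 c hc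
  have memb' := mem_Mlam_iff_s19 lam' hlam'pos ℓ hl0 c hc'
  -- integer casts
  have hlZ : (1:ℤ) ≤ (ℓ:ℤ) := by exact_mod_cast hl0
  have hlnZ : (ℓ:ℤ) ≤ (lam (Fin.last n) : ℤ) := by exact_mod_cast hln
  have hlamnZ : (1:ℤ) ≤ (lam (Fin.last n) : ℤ) := by
    have := hlam (Fin.last n); exact_mod_cast this
  -- membership of (a', d)
  have hmem' : δ * ((lam (Fin.last n) : ℤ) + ℓ) ≤ (ℓ:ℤ) * (a' (Fin.last n) : ℤ) := by
    have h := (memb' a' d).mp hmin.1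
    rw [hlam'last] at h
    push_cast at h
    rw [← hdS] at h
    linarith [h]
  -- tightness from minimality: removing one unit of the last coordinate of a' breaks membership
  have htight : (ℓ:ℤ) * ((a' (Fin.last n) : ℤ) - 1) < δ * ((lam (Fin.last n) : ℤ) + ℓ) := by
    by_contra h'
    push_neg at h'
    set b : Fin (n+1) → ℕ := Function.update a' (Fin.last n) (a' (Fin.last n) - 1) with hbdef
    have hbcs : ∀ i : Fin n, b i.castSucc = a' i.castSucc := fun i =>
      Function.update_of_ne (Fin.castSucc_lt_last i).ne _ _
    have hblast : b (Fin.last n) = a' (Fin.last n) - 1 := Function.update_self _ _ _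
    have hbmem : (b, d) ∈ Mlam lam' := by
      rw [memb' b d]
      have hsum : ∑ i : Fin n, (c i : ℤ) * (b i.castSucc : ℤ)
          = ∑ i : Fin n, (c i : ℤ) * (a' i.castSucc : ℤ) :=
        Finset.sum_congr rfl (fun i _ => by rw [hbcs i])
      rw [hsum, hlam'last, hblast]
      have hcast : ((a' (Fin.last n) - 1 : ℕ) : ℤ) = (a' (Fin.last n) : ℤ) - 1 := by omega
      rw [hcast]
      push_cast
      rw [← hdS]
      linarith [h']
    set eN : Fin (n+1) → ℕ := Function.update (0 : Fin (n+1) → ℕ) (Fin.last n) 1 with heNdef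
    have heNmem : (eN, 0) ∈ Mlam lam' := by
      unfold Mlam
      simp only [Set.mem_setOf_eq, Nat.cast_zero]
      apply Finset.sum_nonneg
      intro i _
      positivity
    apply hmin.2.2
    refine ⟨(b, d), (eN, 0), hbmem, heNmem, ?_, ?_, ?_⟩
    · intro h0
      have := congrArg Prod.snd h0
      simp only [Prod.snd_zero] at this
      omega
    · intro h0
      have := congrFun (congrArg Prod.fst h0) (Fin.last n)
      simp only [Prod.fst_zero, Pi.zero_apply, heNdef, Function.update_self] at this
      omega
    · have heq : a' = b + eN := by
        funext j
        rcases eq_or_ne j (Fin.last n) with hj | hj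
        · subst hj
          simp only [Pi.add_apply, hblast, heNdef, Function.update_self]
          omega
        · simp only [Pi.add_apply, hbdef, heNdef, Function.update_of_ne hj, Pi.zero_apply]
          omega
      rw [Prod.mk_add_mk, Prod.mk.injEq]
      exact ⟨heq, by omega⟩
  have hdS1 : 1 ≤ δ := by
    by_contra h'
    push_neg at h'
    have h0 : δ ≤ 0 := by omega
    have hle : δ * ((lam (Fin.last n) : ℤ) + ℓ) ≤ 0 :=
      mul_nonpos_of_nonpos_of_nonneg h0 (by linarith)
    have hge : (0:ℤ) ≤ (ℓ:ℤ) * ((a' (Fin.last n) : ℤ) - 1) := by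
      have h1 : (1:ℤ) ≤ (a' (Fin.last n) : ℤ) := by exact_mod_cast han
      nlinarith
    linarith
  have hclaim1 : δ < (a' (Fin.last n) : ℤ) := by
    nlinarith [hmem', mul_le_mul_of_nonneg_left hlnZ (by linarith : (0:ℤ) ≤ δ)]
  have hdSle : δ.toNat ≤ a' (Fin.last n) := by omega
  set aN : ℕ := a' (Fin.last n) - δ.toNat with haNdef
  have haN : (aN : ℤ) = (a' (Fin.last n) : ℤ) - δ := by omega
  clear_value aN
  set a : Fin (n+1) → ℕ := Function.update a' (Fin.last n) aN with hadef
  have hacs : ∀ i : Fin n, a i.castSucc = a' i.castSucc := fun i =>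
    Function.update_of_ne (Fin.castSucc_lt_last i).ne _ _
  have halast : a (Fin.last n) = aN := Function.update_self _ _ _
  have haSum : ∑ i : Fin n, (c i : ℤ) * (a i.castSucc : ℤ)
      = ∑ i : Fin n, (c i : ℤ) * (a' i.castSucc : ℤ) :=
    Finset.sum_congr rfl (fun i _ => by rw [hacs i])
  refine ⟨by linarith, a, hacs, by rw [halast]; exact haN, ?_, ?_, ?_⟩
  · rw [memb a d, haSum, halast, haN, ← hdS]
    have hexp1 : δ * ((lam (Fin.last n) : ℤ) + (ℓ:ℤ)) = δ * (lam (Fin.last n) : ℤ) + δ * (ℓ:ℤ) := by ring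
    have hexp2 : (ℓ:ℤ) * ((a' (Fin.last n) : ℤ) - δ) = (ℓ:ℤ) * (a' (Fin.last n) : ℤ) - (ℓ:ℤ) * δ := by ring
    linarith [hmem', hexp1, hexp2]
  · intro h0
    have := congrArg Prod.snd h0
    simp only [Prod.snd_zero] at this
    omega
  · rintro ⟨⟨uv, ue⟩, ⟨wv, we⟩, hu, hw, hune, hwne, heq⟩
    have hv : a = uv + wv := congrArg Prod.fst heq
    have hd2 : d = ue + we := congrArg Prod.snd heq
    have hcs : ∀ i : Fin n, uv i.castSucc + wv i.castSucc = a' i.castSucc := by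
      intro i
      have h5 := congrFun hv i.castSucc
      rw [hacs i] at h5
      simpa using h5.symm
    have hlastc : uv (Fin.last n) + wv (Fin.last n) = aN := by
      have h5 := congrFun hv (Fin.last n)
      rw [halast] at h5
      simpa using h5.symm
    have hu' := (memb uv ue).mp hu
    have hw' := (memb wv we).mp hw
    set Su : ℤ := ∑ i : Fin n, (c i : ℤ) * (uv i.castSucc : ℤ) with hSudef
    set Sw : ℤ := ∑ i : Fin n, (c i : ℤ) * (wv i.castSucc : ℤ) with hSwdef
    have hSsum : Su + Sw = (d:ℤ) * ℓ - δ := by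
      have h1 : Su + Sw = ∑ i : Fin n, (c i : ℤ) * (a' i.castSucc : ℤ) := by
        rw [hSudef, hSwdef, ← Finset.sum_add_distrib]
        refine Finset.sum_congr rfl (fun i _ => ?_)
        rw [← hcs i]
        push_cast
        ring
      rw [h1, hdS]
      ring
    clear_value Su Sw
    set A : ℤ := (ue:ℤ) * ℓ - Su with hAdef
    set B : ℤ := (we:ℤ) * ℓ - Sw with hBdef
    have hdZ : (d:ℤ) = (ue:ℤ) + (we:ℤ) := by exact_mod_cast congrArg Nat.cast hd2
    have hAB : A + B = δ := by
      rw [hAdef, hBdef]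
      linear_combination -hSsum - (ℓ:ℤ) * hdZ
    clear_value A B
    have key : ∀ xv : Fin (n+1) → ℕ, (xv, d) ∈ Mlam lam →
        (∀ i : Fin n, xv i.castSucc ≤ a' i.castSucc) → (xv (Fin.last n) ≤ aN) →
        ((xv (Fin.last n) + 1 ≤ aN) ∨ (∃ i : Fin n, xv i.castSucc + 1 ≤ a' i.castSucc)) →
        False := by
      intro xv hxmem hxcs hxlast hcase
      have hx := (memb xv d).mp hxmem
      set Sx : ℤ := ∑ i : Fin n, (c i : ℤ) * (xv i.castSucc : ℤ) with hSxdef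
      have hSx : Sx ≤ (d:ℤ) * ℓ - δ := by
        have h1 : Sx ≤ ∑ i : Fin n, (c i : ℤ) * (a' i.castSucc : ℤ) := by
          apply Finset.sum_le_sum
          intro i _
          have h8 : (xv i.castSucc : ℤ) ≤ (a' i.castSucc : ℤ) := by exact_mod_cast hxcs i
          have hcnn : (0:ℤ) ≤ (c i : ℤ) := Int.natCast_nonneg _
          exact mul_le_mul_of_nonneg_left h8 hcnn
        linarith only [h1, hdS]
      have hXδ : δ ≤ (d:ℤ) * ℓ - Sx := by linarith only [hSx]
      rcases hcase with hlt | ⟨i, hlt⟩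
      · have h1 : (xv (Fin.last n) : ℤ) ≤ (aN : ℤ) - 1 := by
          have h9 : ((xv (Fin.last n) : ℕ) : ℤ) + 1 ≤ (aN : ℤ) := by exact_mod_cast hlt
          linarith only [h9]
        have h2 : δ * (lam (Fin.last n) : ℤ) ≤ ((d:ℤ) * ℓ - Sx) * (lam (Fin.last n) : ℤ) :=
          mul_le_mul_of_nonneg_right hXδ (by linarith only [hlamnZ])
        have h3 : (ℓ:ℤ) * (xv (Fin.last n) : ℤ) ≤ (ℓ:ℤ) * ((aN:ℤ) - 1) :=
          mul_le_mul_of_nonneg_left h1 (by linarith only [hlZ])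
        have hexp1 : δ * ((lam (Fin.last n) : ℤ) + (ℓ:ℤ)) = δ * (lam (Fin.last n) : ℤ) + δ * (ℓ:ℤ) := by ring
        have hexp3 : (ℓ:ℤ) * ((aN:ℤ)) = (ℓ:ℤ) * (a' (Fin.last n) : ℤ) - (ℓ:ℤ) * δ := by linear_combination (ℓ:ℤ) * haN
        have hexp4 : (ℓ:ℤ) * ((a' (Fin.last n) : ℤ) - 1) = (ℓ:ℤ) * (a' (Fin.last n) : ℤ) - (ℓ:ℤ) := by ring
        have hexp2 : (ℓ:ℤ) * ((aN:ℤ) - 1) = (ℓ:ℤ) * (aN:ℤ) - (ℓ:ℤ) := by ring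
        linarith only [hx, h2, h3, htight, hexp1, hexp2, hexp3, hexp4]
      · have hterm : (c i : ℤ) ≤ (c i : ℤ) * ((a' i.castSucc : ℤ) - (xv i.castSucc : ℤ)) := by
          have h1 : (1:ℤ) ≤ (a' i.castSucc : ℤ) - (xv i.castSucc : ℤ) := by
            have h9 : ((xv i.castSucc : ℕ) : ℤ) + 1 ≤ (a' i.castSucc : ℤ) := by exact_mod_cast hlt
            linarith only [h9]
          have hc1Z : (1:ℤ) ≤ (c i : ℤ) := by exact_mod_cast hc1 i
          have h2 := mul_le_mul_of_nonneg_left h1 (by linarith only [hc1Z] : (0:ℤ) ≤ (c i : ℤ))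
          have h3 : (c i : ℤ) * 1 = (c i : ℤ) := by ring
          linarith only [h2, h3]
        have hsingle : (c i : ℤ) * ((a' i.castSucc : ℤ) - (xv i.castSucc : ℤ)) ≤
            ∑ k : Fin n, (c k : ℤ) * ((a' k.castSucc : ℤ) - (xv k.castSucc : ℤ)) := by
          apply Finset.single_le_sum
            (f := fun k => (c k : ℤ) * ((a' k.castSucc : ℤ) - (xv k.castSucc : ℤ)))
          · intro k _
            have h8 : (xv k.castSucc : ℤ) ≤ (a' k.castSucc : ℤ) := by exact_mod_cast hxcs k
            have hcnn : (0:ℤ) ≤ (c k : ℤ) := Int.natCast_nonneg _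
            exact mul_nonneg hcnn (by linarith only [h8])
          · exact mem_univ i
        have hdiff : ∑ k : Fin n, (c k : ℤ) * ((a' k.castSucc : ℤ) - (xv k.castSucc : ℤ))
            = ((d:ℤ) * ℓ - δ) - Sx := by
          have h1 : ∑ k : Fin n, (c k : ℤ) * ((a' k.castSucc : ℤ) - (xv k.castSucc : ℤ))
              = ∑ k : Fin n, (c k : ℤ) * (a' k.castSucc : ℤ) - Sx := by
            rw [hSxdef, ← Finset.sum_sub_distrib]
            exact Finset.sum_congr rfl (fun k _ => by ring)
          rw [h1, hdS]
          ring
        have hXδ2 : δ + (c i : ℤ) ≤ (d:ℤ) * ℓ - Sx := by linarith only [hterm, hsingle, hdiff]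
        have hcl : (ℓ:ℤ) ≤ (c i : ℤ) * (lam (Fin.last n) : ℤ) := by
          have h1 : (1:ℤ) ≤ (c i : ℤ) := by exact_mod_cast hc1 i
          have h2 := mul_le_mul_of_nonneg_right h1 (by linarith only [hlamnZ] : (0:ℤ) ≤ (lam (Fin.last n) : ℤ))
          have h3 : (1:ℤ) * (lam (Fin.last n) : ℤ) = (lam (Fin.last n) : ℤ) := by ring
          linarith only [h2, h3, hlnZ]
        have h2 : (δ + (c i : ℤ)) * (lam (Fin.last n) : ℤ) ≤
            ((d:ℤ) * ℓ - Sx) * (lam (Fin.last n) : ℤ) :=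
          mul_le_mul_of_nonneg_right hXδ2 (by linarith only [hlamnZ])
        have h3 : (ℓ:ℤ) * (xv (Fin.last n) : ℤ) ≤ (ℓ:ℤ) * (aN:ℤ) :=
          mul_le_mul_of_nonneg_left (by exact_mod_cast hxlast) (by linarith only [hlZ])
        have hexp1 : δ * ((lam (Fin.last n) : ℤ) + (ℓ:ℤ)) = δ * (lam (Fin.last n) : ℤ) + δ * (ℓ:ℤ) := by ring
        have hexp3 : (ℓ:ℤ) * ((aN:ℤ)) = (ℓ:ℤ) * (a' (Fin.last n) : ℤ) - (ℓ:ℤ) * δ := by linear_combination (ℓ:ℤ) * haN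
        have hexp4 : (ℓ:ℤ) * ((a' (Fin.last n) : ℤ) - 1) = (ℓ:ℤ) * (a' (Fin.last n) : ℤ) - (ℓ:ℤ) := by ring
        have hexp5 : (δ + (c i : ℤ)) * (lam (Fin.last n) : ℤ) = δ * (lam (Fin.last n) : ℤ) + (c i : ℤ) * (lam (Fin.last n) : ℤ) := by ring
        linarith only [hx, h2, h3, htight, hcl, hexp1, hexp3, hexp4, hexp5]
    by_cases hue0 : ue = 0
    · have hwd : we = d := by omega
      have hwmem : (wv, d) ∈ Mlam lam := by rw [← hwd]; exact hw
      have huv : ∃ j, uv j ≠ 0 := by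
        by_contra hno
        push_neg at hno
        apply hune
        have h1 : uv = (0 : Fin (n+1) → ℕ) := funext hno
        exact Prod.ext_iff.mpr ⟨h1, hue0⟩
      obtain ⟨j, hj⟩ := huv
      have hxcs : ∀ i : Fin n, wv i.castSucc ≤ a' i.castSucc := fun i => by
        have := hcs i; omega
      have hxlast : wv (Fin.last n) ≤ aN := by omega
      rcases Fin.eq_castSucc_or_eq_last j with ⟨i, hi⟩ | hi
      · refine key wv hwmem hxcs hxlast (Or.inr ⟨i, ?_⟩)
        subst hi
        have h1 := hcs i
        have h2 : uv (Fin.castSucc i) ≠ 0 := hj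
        omega
      · refine key wv hwmem hxcs hxlast (Or.inl ?_)
        subst hi
        have h2 : uv (Fin.last n) ≠ 0 := hj
        omega
    · by_cases hwe0 : we = 0
      · have hud : ue = d := by omega
        have humem : (uv, d) ∈ Mlam lam := by rw [← hud]; exact hu
        have hwv : ∃ j, wv j ≠ 0 := by
          by_contra hno
          push_neg at hno
          apply hwne
          have h1 : wv = (0 : Fin (n+1) → ℕ) := funext hno
          exact Prod.ext_iff.mpr ⟨h1, hwe0⟩
        obtain ⟨j, hj⟩ := hwv
        have hxcs : ∀ i : Fin n, uv i.castSucc ≤ a' i.castSucc := fun i => by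
          have := hcs i; omega
        have hxlast : uv (Fin.last n) ≤ aN := by omega
        rcases Fin.eq_castSucc_or_eq_last j with ⟨i, hi⟩ | hi
        · refine key uv humem hxcs hxlast (Or.inr ⟨i, ?_⟩)
          subst hi
          have h1 := hcs i
          have h2 : wv (Fin.castSucc i) ≠ 0 := hj
          omega
        · refine key uv humem hxcs hxlast (Or.inl ?_)
          subst hi
          have h2 : wv (Fin.last n) ≠ 0 := hj
          omega
      · have hA0 : 0 ≤ A := by
          by_contra h'
          push_neg at h'
          have hB1 : δ + 1 ≤ B := by omega
          have h2 : (δ + 1) * (lam (Fin.last n) : ℤ) ≤ B * (lam (Fin.last n) : ℤ) :=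
            mul_le_mul_of_nonneg_right hB1 (by linarith only [hlamnZ])
          have h3 : (ℓ:ℤ) * (wv (Fin.last n) : ℤ) ≤ (ℓ:ℤ) * (aN:ℤ) := by
            apply mul_le_mul_of_nonneg_left _ (by linarith only [hlZ] : (0:ℤ) ≤ (ℓ:ℤ))
            exact_mod_cast (by omega : wv (Fin.last n) ≤ aN)
          have hexp1 : δ * ((lam (Fin.last n) : ℤ) + (ℓ:ℤ)) = δ * (lam (Fin.last n) : ℤ) + δ * (ℓ:ℤ) := by ring
          have hexp3 : (ℓ:ℤ) * ((aN:ℤ)) = (ℓ:ℤ) * (a' (Fin.last n) : ℤ) - (ℓ:ℤ) * δ := by linear_combination (ℓ:ℤ) * haN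
          have hexp4 : (ℓ:ℤ) * ((a' (Fin.last n) : ℤ) - 1) = (ℓ:ℤ) * (a' (Fin.last n) : ℤ) - (ℓ:ℤ) := by ring
          have hexp5 : (δ + 1) * (lam (Fin.last n) : ℤ) = δ * (lam (Fin.last n) : ℤ) + (lam (Fin.last n) : ℤ) := by ring
          linarith only [h2, h3, htight, hw', hlnZ, hexp1, hexp3, hexp4, hexp5]
        have hB0 : 0 ≤ B := by
          by_contra h'
          push_neg at h'
          have hA1 : δ + 1 ≤ A := by omega
          have h2 : (δ + 1) * (lam (Fin.last n) : ℤ) ≤ A * (lam (Fin.last n) : ℤ) :=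
            mul_le_mul_of_nonneg_right hA1 (by linarith only [hlamnZ])
          have h3 : (ℓ:ℤ) * (uv (Fin.last n) : ℤ) ≤ (ℓ:ℤ) * (aN:ℤ) := by
            apply mul_le_mul_of_nonneg_left _ (by linarith only [hlZ] : (0:ℤ) ≤ (ℓ:ℤ))
            exact_mod_cast (by omega : uv (Fin.last n) ≤ aN)
          have hexp1 : δ * ((lam (Fin.last n) : ℤ) + (ℓ:ℤ)) = δ * (lam (Fin.last n) : ℤ) + δ * (ℓ:ℤ) := by ring
          have hexp3 : (ℓ:ℤ) * ((aN:ℤ)) = (ℓ:ℤ) * (a' (Fin.last n) : ℤ) - (ℓ:ℤ) * δ := by linear_combination (ℓ:ℤ) * haN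
          have hexp4 : (ℓ:ℤ) * ((a' (Fin.last n) : ℤ) - 1) = (ℓ:ℤ) * (a' (Fin.last n) : ℤ) - (ℓ:ℤ) := by ring
          have hexp5 : (δ + 1) * (lam (Fin.last n) : ℤ) = δ * (lam (Fin.last n) : ℤ) + (lam (Fin.last n) : ℤ) := by ring
          linarith only [h2, h3, htight, hu', hlnZ, hexp1, hexp3, hexp4, hexp5]
        set u2 : Fin (n+1) → ℕ :=
          Function.update uv (Fin.last n) (uv (Fin.last n) + A.toNat) with hu2def
        set w2 : Fin (n+1) → ℕ :=
          Function.update wv (Fin.last n) (wv (Fin.last n) + B.toNat) with hw2def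
        have hAt : (A.toNat : ℤ) = A := Int.toNat_of_nonneg hA0
        have hBt : (B.toNat : ℤ) = B := Int.toNat_of_nonneg hB0
        have hu2mem : (u2, ue) ∈ Mlam lam' := by
          rw [memb' u2 ue]
          have hsum : ∑ i : Fin n, (c i : ℤ) * (u2 i.castSucc : ℤ) = Su := by
            rw [hSudef]
            exact Finset.sum_congr rfl (fun i _ => by
              rw [hu2def, Function.update_of_ne (Fin.castSucc_lt_last i).ne])
          rw [hsum, hlam'last]
          have h1 : u2 (Fin.last n) = uv (Fin.last n) + A.toNat := Function.update_self _ _ _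
          rw [h1]
          push_cast [hAt]
          rw [← hAdef]
          have hexp1 : A * ((lam (Fin.last n) : ℤ) + (ℓ:ℤ)) = A * (lam (Fin.last n) : ℤ) + A * (ℓ:ℤ) := by ring
          have hexp2 : (ℓ:ℤ) * ((uv (Fin.last n) : ℤ) + A) = (ℓ:ℤ) * (uv (Fin.last n) : ℤ) + (ℓ:ℤ) * A := by ring
          linarith only [hu', hexp1, hexp2]
        have hw2mem : (w2, we) ∈ Mlam lam' := by
          rw [memb' w2 we]
          have hsum : ∑ i : Fin n, (c i : ℤ) * (w2 i.castSucc : ℤ) = Sw := by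
            rw [hSwdef]
            exact Finset.sum_congr rfl (fun i _ => by
              rw [hw2def, Function.update_of_ne (Fin.castSucc_lt_last i).ne])
          rw [hsum, hlam'last]
          have h1 : w2 (Fin.last n) = wv (Fin.last n) + B.toNat := Function.update_self _ _ _
          rw [h1]
          push_cast [hBt]
          rw [← hBdef]
          have hexp1 : B * ((lam (Fin.last n) : ℤ) + (ℓ:ℤ)) = B * (lam (Fin.last n) : ℤ) + B * (ℓ:ℤ) := by ring
          have hexp2 : (ℓ:ℤ) * ((wv (Fin.last n) : ℤ) + B) = (ℓ:ℤ) * (wv (Fin.last n) : ℤ) + (ℓ:ℤ) * B := by ring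
          linarith only [hw', hexp1, hexp2]
        apply hmin.2.2
        refine ⟨(u2, ue), (w2, we), hu2mem, hw2mem, ?_, ?_, ?_⟩
        · intro h0
          have := congrArg Prod.snd h0
          simp only [Prod.snd_zero] at this
          omega
        · intro h0
          have := congrArg Prod.snd h0
          simp only [Prod.snd_zero] at this
          omega
        · rw [Prod.mk_add_mk, Prod.mk.injEq]
          constructor
          · funext j
            rcases eq_or_ne j (Fin.last n) with hj | hj
            · subst hj
              simp only [Pi.add_apply, hu2def, hw2def, Function.update_self]
              have h8 : ((uv (Fin.last n) + A.toNat) + (wv (Fin.last n) + B.toNat) : ℤ)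
                  = (a' (Fin.last n) : ℤ) := by
                push_cast [hAt, hBt]
                have h4 : ((uv (Fin.last n) : ℤ) + (wv (Fin.last n) : ℤ)) = (aN : ℤ) := by
                  exact_mod_cast hlastc
                linarith only [haN, hAB, h4]
              exact_mod_cast h8.symm
            · simp only [Pi.add_apply, hu2def, hw2def, Function.update_of_ne hj]
              have h5 := congrFun hv j
              rw [hadef, Function.update_of_ne hj] at h5
              simpa using h5
          · omega
end
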